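/- arXiv:1803.09248 — 12 statements merged into one kernel-verified Lean document; each statement's English description precedes it below -/
import Mathlib

section
/- Let g be a finite-dimensional real Lie algebra with a nice basis (e_1, …, e_n). If V and W are subspaces of g each spanned by a subset of the basis (i.e. V = span{e_i : i ∈ s} and W = span{e_i : i ∈ t} for some subsets s, t of {1,…,n}), then the subspace ⁅V, W⁆ spanned by all brackets ⁅v, w⁆ with v ∈ V, w ∈ W is also spanned by a subset of the basis: there is a subset u of {1,…,n} with ⁅V, W⁆ = span{e_i : i ∈ u}. -/
/-- The structure constants of a basis of a real Lie algebra: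
`structConst b i j k` is the coefficient of `b k` in `⁅b i, b j⁆`. -/
noncomputable def structConst {g : Type*} [LieRing g] [LieAlgebra ℝ g] {n : ℕ}
    (b : Module.Basis (Fin n) ℝ g) (i j k : Fin n) : ℝ :=
  b.repr ⁅b i, b j⁆ k

/-- A basis of a real Lie algebra is *nice* if each bracket of two basis elements is a
multiple of a single basis element, and for all `i, k` there is at most one `j` such that
the coefficient of `b k` in `⁅b i, b j⁆` is nonzero. -/
def IsNiceBasis {g : Type*} [LieRing g] [LieAlgebra ℝ g] {n : ℕ}
    (b : Module.Basis (Fin n) ℝ g) : Prop :=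
  (∀ i j, ∃ (k : Fin n) (c : ℝ), ⁅b i, b j⁆ = c • b k) ∧
  (∀ i k j j', structConst b i j k ≠ 0 → structConst b i j' k ≠ 0 → j = j')

/-! A nice basis has the property that every bracket `⁅e_i, e_j⁆` is a multiple of a single
basis vector. By bilinearity `⁅V, W⁆` is spanned by the brackets `⁅e_i, e_j⁆` with `i ∈ s`,
`j ∈ t`, and a span of multiples of basis vectors is the span of those basis vectors that occur
with a nonzero coefficient. -/

namespace Submodule

theorem span_eq_span_image_of_forall_eq_smul {K M ι : Type*} [DivisionRing K] [AddCommGroup M]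
    [Module K M] (v : ι → M) {S : Set M} (hS : ∀ x ∈ S, ∃ k, ∃ c : K, x = c • v k) :
    span K S = span K (v '' {k | ∃ c : K, c ≠ 0 ∧ c • v k ∈ S}) := by
  refine le_antisymm (span_le.2 ?_) (span_le.2 ?_)
  · intro x hx
    obtain ⟨k, c, rfl⟩ := hS x hx
    rcases eq_or_ne c 0 with rfl | hc
    · simp
    · exact smul_mem _ _ (subset_span ⟨k, ⟨c, hc, hx⟩, rfl⟩)
  · rintro _ ⟨k, ⟨c, hc, hck⟩, rfl⟩
    rw [← inv_smul_smul₀ hc (v k)]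
    exact smul_mem _ _ (subset_span hck)

theorem span_lie_span_span_eq_span_image2 {R L M : Type*} [CommRing R] [LieRing L]
    [LieAlgebra R L] [AddCommGroup M] [Module R M] [LieRingModule L M] [LieModule R L M]
    (s : Set L) (t : Set M) :
    span R {x : M | ∃ v ∈ span R s, ∃ w ∈ span R t, x = ⁅v, w⁆}
      = span R (Set.image2 (fun v w => ⁅v, w⁆) s t) := by
  let bracket : L →ₗ[R] M →ₗ[R] M := LieModule.toEnd R L M
  calc span R {x : M | ∃ v ∈ span R s, ∃ w ∈ span R t, x = ⁅v, w⁆}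
      = map₂ bracket (span R s) (span R t) := by
        rw [map₂_eq_span_image2]
        congr 1
        ext x
        simp [bracket, Set.mem_image2, eq_comm]
    _ = span R (Set.image2 (fun v w => ⁅v, w⁆) s t) := map₂_span_span R bracket s t

end Submodule

theorem bracket_of_adapted_is_adapted_general (g : Type*) [LieRing g] [LieAlgebra ℝ g]
    {n : ℕ} (b : Module.Basis (Fin n) ℝ g) (hb : IsNiceBasis b)
    (s t : Set (Fin n)) :
    ∃ u : Set (Fin n),
      Submodule.span ℝ {x : g | ∃ v ∈ Submodule.span ℝ (⇑b '' s),
        ∃ w ∈ Submodule.span ℝ (⇑b '' t), x = ⁅v, w⁆}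
      = Submodule.span ℝ (⇑b '' u) := by
  rw [Submodule.span_lie_span_span_eq_span_image2, Set.image2_image_left, Set.image2_image_right]
  refine ⟨_, Submodule.span_eq_span_image_of_forall_eq_smul b ?_⟩
  rintro _ ⟨i, -, j, -, rfl⟩
  exact hb.1 i j

/-- If `V` and `W` are subspaces adapted to a nice basis, then the subspace spanned by
all brackets `⁅v, w⁆`, `v ∈ V`, `w ∈ W` is also adapted to the basis. -/
theorem bracket_of_adapted_is_adapted (g : Type*) [LieRing g] [LieAlgebra ℝ g]
    [FiniteDimensional ℝ g] {n : ℕ} (b : Module.Basis (Fin n) ℝ g) (hb : IsNiceBasis b)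
    (s t : Set (Fin n)) :
    ∃ u : Set (Fin n),
      Submodule.span ℝ {x : g | ∃ v ∈ Submodule.span ℝ (⇑b '' s),
        ∃ w ∈ Submodule.span ℝ (⇑b '' t), x = ⁅v, w⁆}
      = Submodule.span ℝ (⇑b '' u) :=
  bracket_of_adapted_is_adapted_general g b hb s t
end

section
/- Let g be a finite-dimensional real Lie algebra with a nice basis (e_1, …, e_n). Then every term g^m of the lower central series of g (g^0 = g, g^{m+1} = ⁅g, g^m⁆) is spanned by a subset of the basis: for each m there is a subset s_m of {1,…,n} with g^m = span{e_i : i ∈ s_m}. -/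
/-!
Under condition (i) of a nice basis, the bracket of two basis vectors is a multiple of a basis
vector. Hence if an ideal `I` is spanned by basis vectors, then `⁅g, I⁆`, being spanned by the
brackets `⁅e_i, e_j⁆` with `e_j ∈ I`, is spanned by those basis vectors that occur in them with a
nonzero coefficient. The claim follows by induction on `m`.
-/

theorem Submodule.span_eq_span_image_of_forall_eq_smul_s1 {K V ι : Type*} [Field K]
    [AddCommGroup V] [Module K V] (v : ι → V) {S : Set V}
    (hS : ∀ x ∈ S, ∃ k, ∃ c : K, x = c • v k) :
    span K S = span K (v '' {k | ∃ c : K, c ≠ 0 ∧ c • v k ∈ S}) := by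
  apply le_antisymm <;> refine span_le.2 ?_
  · intro x hx
    obtain ⟨k, c, rfl⟩ := hS x hx
    rcases eq_or_ne c 0 with rfl | hc
    · simp
    · exact smul_mem _ c (subset_span ⟨k, ⟨c, hc, hx⟩, rfl⟩)
  · rintro _ ⟨k, ⟨c, hc, hk⟩, rfl⟩
    rw [← inv_smul_smul₀ hc (v k)]
    exact smul_mem _ _ (subset_span hk)

theorem LieSubmodule.top_lie_eq_span_image2 {R L M : Type*} [CommRing R] [LieRing L]
    [LieAlgebra R L] [AddCommGroup M] [Module R M] [LieRingModule L M] [LieModule R L M]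
    {A : Set L} {B : Set M} (hA : Submodule.span R A = ⊤) (N : LieSubmodule R L M)
    (hN : (N : Submodule R M) = Submodule.span R B) :
    ((⁅(⊤ : LieIdeal R L), N⁆ : LieSubmodule R L M) : Submodule R M) =
      Submodule.span R (Set.image2 (fun x m => ⁅x, m⁆) A B) := by
  have := Submodule.map₂_span_span R (LieModule.toEnd R L M : L →ₗ[R] Module.End R M) A B
  rw [hA, ← hN, Submodule.map₂_eq_span_image2] at this
  rw [LieSubmodule.lieIdeal_oper_eq_linear_span']
  -- `toEnd x m` is `⁅x, m⁆` and `Set.image2` is this set-builder, both definitionally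
  exact this

theorem Module.Basis.exists_top_lie_eq_span_image {K L ι : Type*} [Field K] [LieRing L]
    [LieAlgebra K L] (b : Module.Basis ι K L) (hb : ∀ i j, ∃ k, ∃ c : K, ⁅b i, b j⁆ = c • b k)
    {I : LieIdeal K L} {s : Set ι} (hI : (I : Submodule K L) = Submodule.span K (b '' s)) :
    ∃ t : Set ι, ((⁅(⊤ : LieIdeal K L), I⁆ : LieIdeal K L) : Submodule K L) =
      Submodule.span K (b '' t) := by
  rw [LieIdeal.toLieSubalgebra_toSubmodule] at hI ⊢
  rw [LieSubmodule.top_lie_eq_span_image2 b.span_eq I hI]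
  refine ⟨_, Submodule.span_eq_span_image_of_forall_eq_smul_s1 b ?_⟩
  rintro _ ⟨_, ⟨i, rfl⟩, _, ⟨j, -, rfl⟩, rfl⟩
  exact hb i j

theorem lowerCentralSeries_adapted_general (g : Type*) [LieRing g] [LieAlgebra ℝ g]
    {n : ℕ} (b : Module.Basis (Fin n) ℝ g) (hb : IsNiceBasis b)
    (m : ℕ) :
    ∃ s : Set (Fin n),
      (LieModule.lowerCentralSeries ℝ g g m : Submodule ℝ g) = Submodule.span ℝ (⇑b '' s) := by
  induction m with
  | zero => exact ⟨Set.univ, by simp [b.span_eq]⟩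
  | succ m ih =>
    obtain ⟨s, hs⟩ := ih
    rw [LieModule.lowerCentralSeries_succ]
    exact b.exists_top_lie_eq_span_image hb.1 hs

/-- Every term of the lower central series of a Lie algebra with a nice basis is spanned
by a subset of the basis. -/
theorem lowerCentralSeries_adapted (g : Type*) [LieRing g] [LieAlgebra ℝ g]
    [FiniteDimensional ℝ g] {n : ℕ} (b : Module.Basis (Fin n) ℝ g) (hb : IsNiceBasis b)
    (m : ℕ) :
    ∃ s : Set (Fin n),
      (LieModule.lowerCentralSeries ℝ g g m : Submodule ℝ g) = Submodule.span ℝ (⇑b '' s) :=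
  lowerCentralSeries_adapted_general g b hb m
end

section
/- Let g be a finite-dimensional real Lie algebra with a nice basis (e_1, …, e_n) and structure constants c_{ijk} (the coefficient of e_k in ⁅e_i, e_j⁆). Then for every index k, the set { i ∈ {1,…,n} : there exists j with c_{ijk} ≠ 0 } has even cardinality. -/
/-!
For fixed `k`, join `i` and `j` when `c_{ijk} ≠ 0`; antisymmetry of the bracket makes this a
simple graph on the basis indices. For a nice basis every vertex has at most one neighbour, so the
graph is a matching on its non-isolated vertices, and these are exactly the `i` being counted.
-/

namespace SimpleGraph

theorem even_natCard_support {V : Type*} [Finite V] (G : SimpleGraph V)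
    (hG : ∀ ⦃u v w⦄, G.Adj u v → G.Adj u w → v = w) :
    Even (Nat.card G.support) := by
  classical
  have : Fintype V := Fintype.ofFinite V
  let M : G.Subgraph := (⊤ : G.Subgraph).induce G.support
  have hM : M.IsMatching := by
    rintro u ⟨v, huv⟩
    exact ⟨v, ⟨⟨v, huv⟩, ⟨u, huv.symm⟩, huv⟩, fun w ⟨_, _, huw⟩ => hG huw huv⟩
  simpa [M, Nat.card_eq_fintype_card, Set.toFinset_card] using hM.even_card

end SimpleGraph

section StructConst

variable {g : Type*} [LieRing g] [LieAlgebra ℝ g] {n : ℕ} (b : Module.Basis (Fin n) ℝ g)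

theorem structConst_swap (i j k : Fin n) : structConst b j i k = -structConst b i j k := by
  rw [structConst, ← lie_skew, map_neg, Finsupp.neg_apply, structConst]

theorem structConst_self (i k : Fin n) : structConst b i i k = 0 := by
  simp [structConst]

noncomputable def structConstGraph (k : Fin n) : SimpleGraph (Fin n) where
  Adj i j := structConst b i j k ≠ 0
  symm := ⟨fun i j (h : structConst b i j k ≠ 0) => by rwa [structConst_swap, neg_ne_zero]⟩
  loopless := ⟨fun i h => h (structConst_self b i k)⟩

end StructConst

theorem even_card_incoming_arrows_general (g : Type*) [LieRing g] [LieAlgebra ℝ g]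
    {n : ℕ} (b : Module.Basis (Fin n) ℝ g) (hb : IsNiceBasis b)
    (k : Fin n) :
    Even (Nat.card {i : Fin n // ∃ j, structConst b i j k ≠ 0}) :=
  (structConstGraph b k).even_natCard_support fun i _ _ hj hj' => hb.2 i k _ _ hj hj'

/-- For a nice basis, every node of the associated diagram has an even number of incoming
arrows: for each `k`, the set of `i` such that `c_{ijk} ≠ 0` for some `j` has even
cardinality. -/
theorem even_card_incoming_arrows (g : Type*) [LieRing g] [LieAlgebra ℝ g]
    [FiniteDimensional ℝ g] {n : ℕ} (b : Module.Basis (Fin n) ℝ g) (hb : IsNiceBasis b)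
    (k : Fin n) :
    Even (Nat.card {i : Fin n // ∃ j, structConst b i j k ≠ 0}) :=
  even_card_incoming_arrows_general g b hb k
end

section
/- Let M be an m × n matrix with integer entries, and let the group (ℝˣ)ⁿ of n-tuples of nonzero reals act on (ℝˣ)^m by (g · c)_I = (∏_{j=1}^n g_j^{M_{Ij}}) · c_I for I ∈ {1,…,m}. Suppose J₂ ⊆ J ⊆ {1,…,m} are such that: the rows of the mod-2 reduction of M indexed by J₂ are linearly independent over ℤ/2ℤ and every row of the mod-2 reduction of M lies in their ℤ/2ℤ-span; and the rows of M indexed by J are linearly independent over ℝ and every row of M lies in their ℝ-span. Then the set W = { c ∈ (ℝˣ)^m : c_I = 1 for all I ∈ J₂, and c_I ∈ {1, −1} for all I ∈ J \ J₂ } intersects every orbit of the (ℝˣ)ⁿ-action in exactly one point. -/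
/-!
The coordinates `u ↦ (log |u|, sign bit of u)` identify `ℝˣ` with `ℝ × ℤ/2ℤ`, and in them the
action of `g` becomes translation by `M (log |g|)` in `ℝᵐ` and by `(M mod 2) (sign bits of g)` in
`(ℤ/2ℤ)ᵐ`. The set `W` is where the `J`-coordinates of the first and the `J₂`-coordinates of the
second component vanish. Independence of the rows indexed by `J` and `J₂` lets every orbit reach
`W`; since these rows span all rows, a translation that fixes those coordinates fixes everything,
so the orbit meets `W` only once.
-/

namespace Matrix

variable {K m n : Type*} [Field K] [Fintype n]

theorem mulVec_surjective_of_linearIndependent_row [Fintype m] {A : Matrix m n K}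
    (hA : LinearIndependent K A.row) : Function.Surjective A.mulVec := by
  have hrange : LinearMap.range A.mulVecLin = ⊤ := Submodule.eq_top_of_finrank_eq <| by
    rw [Module.finrank_fintype_fun_eq_card]
    exact hA.rank_matrix
  exact LinearMap.range_eq_top.mp hrange

theorem exists_mulVec_eq_on_of_linearIndependent (A : Matrix m n K) {J : Set m} [Finite J]
    (hA : LinearIndependent K fun i : J => A i) (d : m → K) :
    ∃ x, ∀ i ∈ J, (A *ᵥ x) i = d i := by
  have := Fintype.ofFinite J
  obtain ⟨x, hx⟩ :=
    mulVec_surjective_of_linearIndependent_row (A := A.submatrix (↑) id) hA fun i : J => d i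
  exact ⟨x, fun i hi => congrFun hx ⟨i, hi⟩⟩

theorem mulVec_eq_of_eqOn_of_mem_span {R : Type*} [CommRing R] (A : Matrix m n R) {J : Set m}
    (hA : ∀ i, A i ∈ Submodule.span R (Set.range fun i : J => A i)) {x y : n → R}
    (h : Set.EqOn (A *ᵥ x) (A *ᵥ y) J) : A *ᵥ x = A *ᵥ y := by
  rw [← sub_eq_zero, ← mulVec_sub]
  funext i
  have hker :
      Set.range (fun i : J => A i) ⊆ LinearMap.ker ((dotProductBilin R R).flip (x - y)) := by
    rintro _ ⟨j, rfl⟩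
    show A j ⬝ᵥ (x - y) = 0
    rw [dotProduct_sub, sub_eq_zero]
    exact h j.2
  exact Submodule.span_le.mpr hker (hA i)

end Matrix

open Matrix

theorem map_prod_zpow_eq_mulVec {G R m n : Type*} [CommGroup G] [Ring R] [Fintype n] {f : G → R}
    (hf : ∀ u v, f (u * v) = f u + f v) (M : Matrix m n ℤ) (g : n → G) (I : m) :
    f (∏ j, g j ^ M I j) = (M.map (↑) *ᵥ fun j => f (g j)) I := by
  let φ : Additive G →+ R := AddMonoidHom.mk' (fun u => f u.toMul) hf
  change φ (Additive.ofMul (∏ j, g j ^ M I j)) = _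
  simp only [ofMul_prod, ofMul_zpow, map_sum, map_zsmul, zsmul_eq_mul]
  rfl

noncomputable def logAbs (u : ℝˣ) : ℝ := Real.log |(u : ℝ)|

noncomputable def signBit (u : ℝˣ) : ZMod 2 := if 0 < (u : ℝ) then 0 else 1

theorem logAbs_mul (u v : ℝˣ) : logAbs (u * v) = logAbs u + logAbs v := by
  simp only [logAbs, Units.val_mul, abs_mul]
  exact Real.log_mul (abs_ne_zero.mpr u.ne_zero) (abs_ne_zero.mpr v.ne_zero)

theorem signBit_mul (u v : ℝˣ) : signBit (u * v) = signBit u + signBit v := by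
  rcases u.ne_zero.lt_or_gt with hu | hu <;> rcases v.ne_zero.lt_or_gt with hv | hv <;>
    simp [signBit, mul_pos_iff, hu, hv, hu.not_gt, hv.not_gt, (by decide : (1 : ZMod 2) + 1 = 0)]

theorem logAbs_eq_zero_iff {u : ℝˣ} : logAbs u = 0 ↔ u = 1 ∨ u = -1 := by
  have hu : 0 < |(u : ℝ)| := abs_pos.2 u.ne_zero
  rw [logAbs, Real.log_eq_zero, abs_eq zero_le_one, Units.ext_iff, Units.ext_iff]
  refine ⟨fun h => ?_, fun h => Or.inr (Or.inl h)⟩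
  rcases h with h | h | h
  · linarith
  · exact h
  · linarith

theorem bijective_logAbs_signBit : Function.Bijective fun u => (logAbs u, signBit u) := by
  constructor
  · intro u v h
    obtain ⟨hl, hs⟩ := Prod.ext_iff.mp h
    have habs : |(u : ℝ)| = |(v : ℝ)| :=
      Real.log_injOn_pos (abs_pos.2 u.ne_zero) (abs_pos.2 v.ne_zero) hl
    rcases u.ne_zero.lt_or_gt with hu | hu <;> rcases v.ne_zero.lt_or_gt with hv | hv <;>
      simp only [signBit, hu, hv, hu.not_gt, hv.not_gt, if_true, if_false] at hs <;>
      simp only [abs_of_neg, abs_of_pos, hu, hv, neg_inj] at habs <;>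
      first | exact Units.ext habs | exact absurd hs (by decide)
  · rintro ⟨t, ε⟩
    rcases (by decide : ∀ x : ZMod 2, x = 0 ∨ x = 1) ε with rfl | rfl
    · refine ⟨Units.mk0 (Real.exp t) (Real.exp_ne_zero t), ?_⟩
      simp [logAbs, signBit, Real.exp_pos]
    · refine ⟨Units.mk0 (-Real.exp t) (neg_ne_zero.2 (Real.exp_ne_zero t)), ?_⟩
      simp [logAbs, signBit, (Real.exp_pos t).not_gt]

theorem exists_logAbs_eq_and_signBit_eq {ι : Type*} (x : ι → ℝ) (ε : ι → ZMod 2) :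
    ∃ g : ι → ℝˣ, (fun j => logAbs (g j)) = x ∧ (fun j => signBit (g j)) = ε := by
  choose g hg using fun j => bijective_logAbs_signBit.2 (x j, ε j)
  exact ⟨g, funext fun j => congrArg Prod.fst (hg j), funext fun j => congrArg Prod.snd (hg j)⟩

theorem eq_one_iff_logAbs_eq_zero_and_signBit_eq_zero {u : ℝˣ} :
    u = 1 ↔ logAbs u = 0 ∧ signBit u = 0 := by
  rw [← bijective_logAbs_signBit.1.eq_iff, Prod.ext_iff]
  simp [logAbs, signBit]

theorem forall_eq_one_and_eq_one_or_neg_one_iff {ι : Type*} {J₂ J : Set ι} (hJ : J₂ ⊆ J)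
    (w : ι → ℝˣ) :
    ((∀ I ∈ J₂, w I = 1) ∧ ∀ I ∈ J \ J₂, w I = 1 ∨ w I = -1) ↔
      (∀ I ∈ J, logAbs (w I) = 0) ∧ ∀ I ∈ J₂, signBit (w I) = 0 := by
  constructor
  · rintro ⟨h₂, h⟩
    refine ⟨fun I hI => logAbs_eq_zero_iff.2 ?_, fun I hI =>
      (eq_one_iff_logAbs_eq_zero_and_signBit_eq_zero.1 (h₂ I hI)).2⟩
    by_cases hI₂ : I ∈ J₂
    · exact Or.inl (h₂ I hI₂)
    · exact h I ⟨hI, hI₂⟩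
  · rintro ⟨h, h₂⟩
    exact ⟨fun I hI => eq_one_iff_logAbs_eq_zero_and_signBit_eq_zero.2 ⟨h I (hJ hI), h₂ I hI⟩,
      fun I hI => logAbs_eq_zero_iff.1 (h I hI.1)⟩

/-- The fundamental domain for the exponentiated action of the diagonal group determined
by the root matrix `M`: if the rows of `M` indexed by `J₂` form a maximal
`ℤ/2ℤ`-linearly independent family mod 2, and the rows indexed by `J ⊇ J₂` form a maximal
`ℝ`-linearly independent family, then the set
`W = {c : c_I = 1 for I ∈ J₂, c_I = ±1 for I ∈ J \ J₂}`
meets every orbit of `(ℝˣ)ⁿ` acting by `(g · c)_I = (∏ j, g_j ^ M_{Ij}) c_I` in exactly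
one point. -/
theorem fundamental_domain_of_root_matrix
    (m n : ℕ) (M : Matrix (Fin m) (Fin n) ℤ)
    (J₂ J : Set (Fin m)) (hJ : J₂ ⊆ J)
    (h2indep : LinearIndependent (ZMod 2)
      (fun I : J₂ => fun j => ((M I j : ZMod 2))))
    (h2span : ∀ I : Fin m, (fun j => ((M I j : ZMod 2))) ∈
      Submodule.span (ZMod 2) (Set.range (fun I : J₂ => fun j => ((M I j : ZMod 2)))))
    (hRindep : LinearIndependent ℝ (fun I : J => fun j => ((M I j : ℝ))))
    (hRspan : ∀ I : Fin m, (fun j => ((M I j : ℝ))) ∈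
      Submodule.span ℝ (Set.range (fun I : J => fun j => ((M I j : ℝ))))) :
    ∀ c : Fin m → ℝˣ, ∃! w : Fin m → ℝˣ,
      ((∀ I ∈ J₂, w I = 1) ∧ (∀ I ∈ J \ J₂, w I = 1 ∨ w I = -1)) ∧
      ∃ gd : Fin n → ℝˣ, ∀ I, w I = (∏ j, gd j ^ M I j) * c I := by
  intro c
  set Mℝ : Matrix (Fin m) (Fin n) ℝ := M.map (↑)
  set M₂ : Matrix (Fin m) (Fin n) (ZMod 2) := M.map (↑)
  set act : (Fin n → ℝˣ) → Fin m → ℝˣ := fun g I => (∏ j, g j ^ M I j) * c I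
  have logAbs_act (g : Fin n → ℝˣ) (I : Fin m) :
      logAbs (act g I) = (Mℝ *ᵥ fun j => logAbs (g j)) I + logAbs (c I) := by
    rw [logAbs_mul, map_prod_zpow_eq_mulVec logAbs_mul]
  have signBit_act (g : Fin n → ℝˣ) (I : Fin m) :
      signBit (act g I) = (M₂ *ᵥ fun j => signBit (g j)) I + signBit (c I) := by
    rw [signBit_mul, map_prod_zpow_eq_mulVec signBit_mul]
  have mem_iff (g : Fin n → ℝˣ) :
      ((∀ I ∈ J₂, act g I = 1) ∧ ∀ I ∈ J \ J₂, act g I = 1 ∨ act g I = -1) ↔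
        (∀ I ∈ J, (Mℝ *ᵥ fun j => logAbs (g j)) I = -logAbs (c I)) ∧
          ∀ I ∈ J₂, (M₂ *ᵥ fun j => signBit (g j)) I = -signBit (c I) := by
    simp only [forall_eq_one_and_eq_one_or_neg_one_iff hJ, logAbs_act, signBit_act,
      add_eq_zero_iff_eq_neg]
  obtain ⟨x, hx⟩ := Mℝ.exists_mulVec_eq_on_of_linearIndependent hRindep fun I => -logAbs (c I)
  obtain ⟨ε, hε⟩ := M₂.exists_mulVec_eq_on_of_linearIndependent h2indep fun I => -signBit (c I)
  obtain ⟨g, rfl, rfl⟩ := exists_logAbs_eq_and_signBit_eq x ε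
  refine ⟨act g, ⟨(mem_iff g).2 ⟨hx, hε⟩, g, fun I => rfl⟩, ?_⟩
  rintro w ⟨hw, g', hg'⟩
  obtain rfl : w = act g' := funext hg'
  obtain ⟨hx', hε'⟩ := (mem_iff g').1 hw
  have hlog :=
    Mℝ.mulVec_eq_of_eqOn_of_mem_span hRspan fun I hI => (hx' I hI).trans (hx I hI).symm
  have hsign :=
    M₂.mulVec_eq_of_eqOn_of_mem_span h2span fun I hI => (hε' I hI).trans (hε I hI).symm
  funext I
  exact bijective_logAbs_signBit.1 <| Prod.ext
    (by simp only [logAbs_act, hlog]) (by simp only [signBit_act, hsign])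
end

section
/- There do not exist real numbers x₁, x₂, x₃, x₄, x₅, x₆, all nonzero, satisfying the three equations x₃·x₅ = x₁·x₆, x₁·x₄ = −x₂·x₃, and x₄·x₅ = x₂·x₆. -/
/-- The Jacobi identity for the nice diagram of Figure 3 has no solution with all
structure constants nonzero: there are no nonzero reals `x₁, …, x₆` with
`x₃x₅ = x₁x₆`, `x₁x₄ = −x₂x₃` and `x₄x₅ = x₂x₆`. -/
theorem no_nonzero_solution :
    ¬ ∃ x₁ x₂ x₃ x₄ x₅ x₆ : ℝ,
      x₁ ≠ 0 ∧ x₂ ≠ 0 ∧ x₃ ≠ 0 ∧ x₄ ≠ 0 ∧ x₅ ≠ 0 ∧ x₆ ≠ 0 ∧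
      x₃ * x₅ = x₁ * x₆ ∧ x₁ * x₄ = -(x₂ * x₃) ∧ x₄ * x₅ = x₂ * x₆ := by
  rintro ⟨a, b, c, d, e, f, ha, hb, hc, hd, he, hf, h1, h2, h3⟩
  have key : b * c * f = - (b * c * f) := by linear_combination f*h2 + d*h1 - c*h3
  have : b * c = 0 := by
    have hf2 : b * c * f = 0 := by linarith
    have := mul_eq_zero.mp hf2
    tauto
  rcases mul_eq_zero.mp this with h | h <;> [exact hb h; exact hc h]
end

section
/- Let n ∈ ℕ and let ℝⁿ carry a Lie bracket μ for which the standard basis (e_1, …, e_n) is nice, with structure constants c_{ijk} (the coefficient of e_k in μ(e_i, e_j)). For A ∈ End(ℝⁿ), define the bilinear map θ_A(x, y) = A μ(x, y) − μ(A x, y) − μ(x, A y). If θ_A is supported on the support of μ, i.e. for all i, j, k with c_{ijk} = 0 the coefficient of e_k in θ_A(e_i, e_j) is zero, then θ_A = θ_D, where D ∈ End(ℝⁿ) is the diagonal part of A (D e_i = A_{ii} e_i for each i). -/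
/-- Let `μ` be a Lie bracket on `ℝⁿ` for which the standard basis is nice. If
`θ_A(x,y) = A μ(x,y) − μ(Ax,y) − μ(x,Ay)` is supported on the support of `μ`, then
`θ_A = θ_D` where `D` is the diagonal part of `A`. -/
theorem theta_eq_theta_diagonal (n : ℕ)
    (μ : (Fin n → ℝ) →ₗ[ℝ] (Fin n → ℝ) →ₗ[ℝ] (Fin n → ℝ))
    (halt : ∀ x, μ x x = 0)
    (hjac : ∀ x y z, μ (μ x y) z + μ (μ y z) x + μ (μ z x) y = 0)
    (hnice1 : ∀ i j : Fin n, ∃ (k : Fin n) (c : ℝ),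
      μ (Pi.single i 1) (Pi.single j 1) = c • (Pi.single k 1 : Fin n → ℝ))
    (hnice2 : ∀ i k j j' : Fin n,
      μ (Pi.single i 1) (Pi.single j 1) k ≠ 0 →
      μ (Pi.single i 1) (Pi.single j' 1) k ≠ 0 → j = j')
    (A D : (Fin n → ℝ) →ₗ[ℝ] (Fin n → ℝ))
    (hD : ∀ i : Fin n, D (Pi.single i 1) = (A (Pi.single i 1) i) • (Pi.single i 1 : Fin n → ℝ))
    (hsupp : ∀ i j k : Fin n, μ (Pi.single i 1) (Pi.single j 1) k = 0 →
      (A (μ (Pi.single i 1) (Pi.single j 1)) - μ (A (Pi.single i 1)) (Pi.single j 1)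
        - μ (Pi.single i 1) (A (Pi.single j 1))) k = 0) :
    ∀ x y : Fin n → ℝ,
      A (μ x y) - μ (A x) y - μ x (A y) = D (μ x y) - μ (D x) y - μ x (D y) := by
  classical
  have hanti : ∀ x y, μ x y = - μ y x := by
    intro x y
    have h := halt (x + y)
    simp only [map_add, LinearMap.add_apply, halt, zero_add, add_zero] at h
    linear_combination (norm := abel) h
  have expand : ∀ v : Fin n → ℝ, v = ∑ l, v l • (Pi.single l 1 : Fin n → ℝ) := by
    intro v
    funext k
    simp [Pi.single_apply, Finset.sum_apply]
  have key : ∀ i j k : Fin n,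
      A (μ (Pi.single i 1) (Pi.single j 1)) k - μ (A (Pi.single i 1)) (Pi.single j 1) k
        - μ (Pi.single i 1) (A (Pi.single j 1)) k
      = D (μ (Pi.single i 1) (Pi.single j 1)) k - μ (D (Pi.single i 1)) (Pi.single j 1) k
        - μ (Pi.single i 1) (D (Pi.single j 1)) k := by
    intro i j k
    by_cases h : μ (Pi.single i 1) (Pi.single j 1) k = 0
    · have h1 := hsupp i j k h
      simp only [Pi.sub_apply] at h1
      rw [h1]
      obtain ⟨k', c, hc⟩ := hnice1 i j
      have hck : c * (Pi.single k' 1 : Fin n → ℝ) k = 0 := by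
        have := congrFun hc k
        simpa [h] using this.symm
      have hd1 : D (μ (Pi.single i 1) (Pi.single j 1)) k = 0 := by
        rw [hc, map_smul, hD k']
        simp only [Pi.smul_apply, smul_eq_mul, smul_smul]
        rcases mul_eq_zero.1 hck with h0 | h0 <;> simp [h0]
      have hd2 : μ (D (Pi.single i 1)) (Pi.single j 1) k = 0 := by
        rw [hD i, map_smul]
        simp only [LinearMap.smul_apply, Pi.smul_apply, smul_eq_mul]
        rw [h, mul_zero]
      have hd3 : μ (Pi.single i 1) (D (Pi.single j 1)) k = 0 := by
        rw [hD j, map_smul]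
        simp only [Pi.smul_apply, smul_eq_mul]
        rw [h, mul_zero]
      rw [hd1, hd2, hd3]; ring
    · obtain ⟨k', c, hc⟩ := hnice1 i j
      have hkk : k = k' := by
        by_contra hne
        apply h
        rw [hc]
        simp [Pi.single_apply, hne]
      subst hkk
      have hcval : μ (Pi.single i 1) (Pi.single j 1) k = c := by
        rw [hc]; simp [Pi.single_apply]
      have hA1 : A (μ (Pi.single i 1) (Pi.single j 1)) k = c * A (Pi.single k 1) k := by
        rw [hc, map_smul]; simp
      have hD1 : D (μ (Pi.single i 1) (Pi.single j 1)) k = c * A (Pi.single k 1) k := by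
        rw [hc, map_smul, hD k]
        simp [smul_smul, mul_comm]
      have hD2 : μ (D (Pi.single i 1)) (Pi.single j 1) k = A (Pi.single i 1) i * c := by
        rw [hD i, map_smul]
        simp only [LinearMap.smul_apply, Pi.smul_apply, smul_eq_mul]
        rw [hcval]
      have hD3 : μ (Pi.single i 1) (D (Pi.single j 1)) k = A (Pi.single j 1) j * c := by
        rw [hD j, map_smul]
        simp only [Pi.smul_apply, smul_eq_mul]
        rw [hcval]
      have hA2 : μ (A (Pi.single i 1)) (Pi.single j 1) k = A (Pi.single i 1) i * c := by
        rw [show A (Pi.single i 1) = ∑ l, A (Pi.single i 1) l • (Pi.single l 1 : Fin n → ℝ)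
          from expand _, map_sum]
        simp only [LinearMap.sum_apply, Finset.sum_apply, map_smul,
          LinearMap.smul_apply, Pi.smul_apply, smul_eq_mul]
        rw [Finset.sum_eq_single i]
        · rw [hcval]; congr 1; simp [Pi.single_apply]
        · intro l _ hli
          have hz : μ (Pi.single l 1) (Pi.single j 1) k = 0 := by
            by_contra hnz
            have h1 : μ (Pi.single j 1) (Pi.single l 1) k ≠ 0 := by
              intro hh
              apply hnz
              have := congrFun (hanti (Pi.single l (1:ℝ)) (Pi.single j 1)) k
              simpa [hh] using this
            have h2 : μ (Pi.single j 1) (Pi.single i 1) k ≠ 0 := by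
              intro hh
              apply h
              have := congrFun (hanti (Pi.single i (1:ℝ)) (Pi.single j 1)) k
              simpa [hh] using this
            exact hli (hnice2 j k i l h2 h1).symm
          rw [hz, mul_zero]
        · intro hi; exact absurd (Finset.mem_univ i) hi
      have hA3 : μ (Pi.single i 1) (A (Pi.single j 1)) k = A (Pi.single j 1) j * c := by
        rw [show A (Pi.single j 1) = ∑ l, A (Pi.single j 1) l • (Pi.single l 1 : Fin n → ℝ)
          from expand _, map_sum]
        simp only [Finset.sum_apply, map_smul, Pi.smul_apply, smul_eq_mul]
        rw [Finset.sum_eq_single j]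
        · rw [hcval]; congr 1; simp [Pi.single_apply]
        · intro l _ hlj
          have hz : μ (Pi.single i 1) (Pi.single l 1) k = 0 := by
            by_contra hnz
            exact hlj (hnice2 i k l j hnz h)
          rw [hz, mul_zero]
        · intro hi; exact absurd (Finset.mem_univ j) hi
      rw [hA1, hA2, hA3, hD1, hD2, hD3]
  intro x y
  funext k
  rw [show x = ∑ i, x i • (Pi.single i 1 : Fin n → ℝ) from expand x,
     show y = ∑ j, y j • (Pi.single j 1 : Fin n → ℝ) from expand y]
  simp only [map_sum, map_smul, LinearMap.sum_apply, LinearMap.smul_apply,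
    Finset.sum_apply, Pi.sub_apply, Pi.smul_apply, smul_eq_mul,
    Finset.mul_sum, Finset.sum_mul]
  rw [← Finset.sum_sub_distrib, ← Finset.sum_sub_distrib, ← Finset.sum_sub_distrib,
    ← Finset.sum_sub_distrib]
  apply Finset.sum_congr rfl
  intro i _
  rw [← Finset.sum_sub_distrib, ← Finset.sum_sub_distrib, ← Finset.sum_sub_distrib,
    ← Finset.sum_sub_distrib]
  apply Finset.sum_congr rfl
  intro j _
  linear_combination y i * x j * key j i k
end

section
/- Let g be the 6-dimensional real Lie algebra with basis e_1, …, e_6 whose only nonzero brackets of basis vectors (up to antisymmetry) are ⁅e_1, e_2⁆ = e_3, ⁅e_1, e_3⁆ = e_4, ⁅e_1, e_4⁆ = e_6, ⁅e_2, e_3⁆ = e_6, ⁅e_2, e_5⁆ = e_6 (this bracket satisfies the Jacobi identity and g is nilpotent; it is the Lie algebra N_{6,1,4}). Then g does not admit any nice basis. -/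
/-!
If brackets of basis vectors are multiples of basis vectors, every term of the lower central
series is spanned by the basis vectors it contains. For `N_{6,1,4}` the terms are
`⟨e 2, e 3, e 5⟩ ⊃ ⟨e 3, e 5⟩ ⊃ ⟨e 5⟩`, so a nice basis `b` contains vectors `b u`, `b v`, `b w`
in them with nonzero `e 2`-, `e 3`-, `e 5`-coordinates. Now `ad (b v)` sends `x` to a multiple
of `b w` proportional to the `e 0`-coordinate of `x`, and `ad (b u)` does the same with the
`e 1`-coordinate once the `e 0`-coordinate vanishes, so the uniqueness condition of a nice basis
leaves a single basis vector `b a` with nonzero `e 0`-coordinate and a single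
other one `b m` with nonzero `e 1`-coordinate. Comparing `ad (b m)` and `ad (b a)` on `b u` and
on a sixth basis vector `b t` then puts `b t` into `⟨e 3, e 5⟩ = ⟨b v, b w⟩`, which is absurd.
-/

open Module Submodule LieModule Set

theorem Submodule.exists_mem_apply_ne_zero_of_mem_span {R M : Type*} [CommSemiring R]
    [AddCommMonoid M] [Module R M] (f : M →ₗ[R] R) {s : Set M} {x : M}
    (hx : x ∈ span R s) (hfx : f x ≠ 0) : ∃ z ∈ s, f z ≠ 0 := by
  by_contra! h
  exact hfx (span_le (p := LinearMap.ker f) |>.mpr h hx)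

theorem Module.Basis.repr_smul_add_smul {ι K M : Type*} [Field K] [AddCommGroup M] [Module K M]
    (b : Basis ι K M) {v w : ι} {x y : M} {p q s : K} (hp : p ≠ 0) (hs : s ≠ 0)
    (hv : b v = p • x + q • y) (hw : b w = s • y) (β γ : K) :
    b.repr (β • x + γ • y) = .single v (β / p) + .single w ((γ - β * q / p) / s) := by
  have h : β • x + γ • y = (β / p) • b v + ((γ - β * q / p) / s) • b w := by
    rw [hv, hw, smul_add, smul_smul, smul_smul, smul_smul, div_mul_cancel₀ _ hp,
      div_mul_cancel₀ _ hs]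
    module
  simp [h]

theorem Module.Basis.exists_ne_repr_ne_zero {ι κ K M : Type*} [Field K] [AddCommGroup M]
    [Module K M] (e : Basis κ K M) (b : Basis ι K M) {i₀ i₁ : κ} (hi : i₀ ≠ i₁) {a : ι}
    (ha : e.repr (b a) i₀ ≠ 0) (hzero : ∀ j ≠ a, e.repr (b j) i₀ = 0) :
    ∃ m ≠ a, e.repr (b m) i₁ ≠ 0 := by
  -- this functional vanishes on `b a` but not on `e i₁`
  obtain ⟨_, ⟨m, rfl⟩, hm⟩ := exists_mem_apply_ne_zero_of_mem_span
    (e.repr (b a) i₀ • e.coord i₁ - e.repr (b a) i₁ • e.coord i₀) (b.mem_span (e i₁))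
    (by simpa [Finsupp.single_apply, hi, hi.symm] using ha)
  have hma : m ≠ a := by rintro rfl; simp [mul_comm] at hm
  refine ⟨m, hma, fun h => ?_⟩
  simp [hzero m hma, h] at hm

namespace LieModule

variable {R L M : Type*} [CommRing R] [LieRing L] [LieAlgebra R L] [AddCommGroup M] [Module R M]
  [LieRingModule L M] {k : ℕ}

theorem lie_mem_lowerCentralSeries_succ (x : L) {m : M} (hm : m ∈ lowerCentralSeries R L M k) :
    ⁅x, m⁆ ∈ lowerCentralSeries R L M (k + 1) := by
  rw [lowerCentralSeries_succ]
  exact LieSubmodule.lie_mem_lie (LieSubmodule.mem_top x) hm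

theorem mem_of_mem_lowerCentralSeries_succ [LieModule R L M] {N : Submodule R M}
    (h : ∀ x : L, ∀ m ∈ lowerCentralSeries R L M k, ⁅x, m⁆ ∈ N) {z : M}
    (hz : z ∈ lowerCentralSeries R L M (k + 1)) : z ∈ N := by
  rw [← LieSubmodule.mem_toSubmodule, lowerCentralSeries_succ,
    LieSubmodule.lieIdeal_oper_eq_linear_span'] at hz
  refine span_le.mpr ?_ hz
  rintro _ ⟨x, -, m, hm, rfl⟩
  exact h x m hm

end LieModule

section NiceBasis

variable {K g ι : Type*} [Field K] [LieRing g] [LieAlgebra K g] {b : Basis ι K g}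

theorem mem_span_range_inter_lowerCentralSeries
    (hb : ∀ i j, ∃ k, ∃ c : K, ⁅b i, b j⁆ = c • b k) {k : ℕ} {z : g}
    (hz : z ∈ lowerCentralSeries K g g k) :
    z ∈ span K (range b ∩ lowerCentralSeries K g g k) := by
  induction k generalizing z with
  | zero => simp [b.span_eq]
  | succ k ih =>
    refine mem_of_mem_lowerCentralSeries_succ (fun x y hy => ?_) hz
    have hx : x ∈ span K (range b) := b.span_eq ▸ mem_top
    replace hy := ih hy
    induction hx, hy using span_induction₂ with
    | mem_mem _ _ hx hy =>
      obtain ⟨⟨i, rfl⟩, ⟨j, rfl⟩, hj⟩ := And.intro hx hy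
      obtain ⟨l, c, hl⟩ := hb i j
      rcases eq_or_ne c 0 with rfl | hc
      · simp [hl]
      have hl_mem : c • b l ∈ lowerCentralSeries K g g (k + 1) :=
        hl ▸ lie_mem_lowerCentralSeries_succ (b i) hj
      rw [hl]
      exact smul_mem _ _ (subset_span ⟨mem_range_self l, (smul_mem_iff _ hc).mp hl_mem⟩)
    | zero_left => simp
    | zero_right => simp
    | add_left _ _ _ _ _ _ h₁ h₂ => rw [add_lie]; exact add_mem h₁ h₂
    | add_right _ _ _ _ _ _ h₁ h₂ => rw [lie_add]; exact add_mem h₁ h₂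
    | smul_left _ _ _ _ _ h => rw [smul_lie]; exact smul_mem _ _ h
    | smul_right _ _ _ _ _ h => rw [lie_smul]; exact smul_mem _ _ h

theorem exists_basis_mem_lowerCentralSeries_apply_ne_zero
    (hb : ∀ i j, ∃ k, ∃ c : K, ⁅b i, b j⁆ = c • b k) {k : ℕ} {x : g}
    (hx : x ∈ lowerCentralSeries K g g k) (f : g →ₗ[K] K) (hfx : f x ≠ 0) :
    ∃ j, b j ∈ lowerCentralSeries K g g k ∧ f (b j) ≠ 0 := by
  obtain ⟨_, ⟨⟨j, rfl⟩, hj⟩, hfj⟩ :=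
    exists_mem_apply_ne_zero_of_mem_span f (mem_span_range_inter_lowerCentralSeries hb hx) hfx
  exact ⟨j, hj, hfj⟩

end NiceBasis

namespace N614

variable {g : Type*} [LieRing g] [LieAlgebra ℝ g]

/-- `⁅x, y⁆` in the coordinates of `e`, read off from the structure equations
`(0, 0, e¹², e¹³, 0, e¹⁴ + e²³ + e²⁵)`; note that `e` is indexed from `0`. -/
noncomputable def bracket (e : Basis (Fin 6) ℝ g) (x y : g) : g :=
  (e.repr x 0 * e.repr y 1 - e.repr x 1 * e.repr y 0) • e 2 +
  (e.repr x 0 * e.repr y 2 - e.repr x 2 * e.repr y 0) • e 3 +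
  (e.repr x 0 * e.repr y 3 - e.repr x 3 * e.repr y 0 + e.repr x 1 * e.repr y 2
    - e.repr x 2 * e.repr y 1 + e.repr x 1 * e.repr y 4 - e.repr x 4 * e.repr y 1) • e 5

variable {e : Basis (Fin 6) ℝ g}

theorem lie_eq_bracket
    (h12 : ⁅e 0, e 1⁆ = e 2) (h13 : ⁅e 0, e 2⁆ = e 3)
    (h14 : ⁅e 0, e 3⁆ = e 5) (h23 : ⁅e 1, e 2⁆ = e 5) (h25 : ⁅e 1, e 4⁆ = e 5)
    (h0 : ∀ i j : Fin 6, i < j →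
      (i, j) ∉ ({(0, 1), (0, 2), (0, 3), (1, 2), (1, 4)} : Set (Fin 6 × Fin 6)) →
      ⁅e i, e j⁆ = 0) (x y : g) :
    ⁅x, y⁆ = bracket e x y := by
  have hskew : ∀ i j : Fin 6, j < i → ⁅e i, e j⁆ = -⁅e j, e i⁆ :=
    fun _ _ _ => (lie_skew _ _).symm
  conv_lhs => rw [← e.sum_repr x, ← e.sum_repr y, Fin.sum_univ_six, Fin.sum_univ_six]
  simp only [add_lie, lie_add, smul_lie, lie_smul]
  simp [hskew, h0, h12, h13, h14, h23, h25, bracket]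
  module

theorem mem_span_two_three_five (he : ∀ x y : g, ⁅x, y⁆ = bracket e x y) {z : g}
    (hz : z ∈ lowerCentralSeries ℝ g g 1) : z ∈ span ℝ (e '' {2, 3, 5}) := by
  refine mem_of_mem_lowerCentralSeries_succ (fun x y _ => ?_) hz
  rw [he, e.mem_span_image, Finsupp.support_subset_iff]
  intro i hi
  fin_cases i <;> simp_all [bracket]

theorem mem_span_three_five (he : ∀ x y : g, ⁅x, y⁆ = bracket e x y) {z : g}
    (hz : z ∈ lowerCentralSeries ℝ g g 2) : z ∈ span ℝ (e '' {3, 5}) := by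
  refine mem_of_mem_lowerCentralSeries_succ (fun x y hy => ?_) hz
  have hy := Finsupp.support_subset_iff.mp (e.mem_span_image.mp (mem_span_two_three_five he hy))
  rw [he, e.mem_span_image, Finsupp.support_subset_iff]
  intro i hi
  fin_cases i <;> simp_all [bracket]

theorem mem_span_five (he : ∀ x y : g, ⁅x, y⁆ = bracket e x y) {z : g}
    (hz : z ∈ lowerCentralSeries ℝ g g 3) : z ∈ span ℝ (e '' {5}) := by
  refine mem_of_mem_lowerCentralSeries_succ (fun x y hy => ?_) hz
  have hy := Finsupp.support_subset_iff.mp (e.mem_span_image.mp (mem_span_three_five he hy))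
  rw [he, e.mem_span_image, Finsupp.support_subset_iff]
  intro i hi
  fin_cases i <;> simp_all [bracket]

theorem lie_eq_of_repr_zero_one (he : ∀ x y : g, ⁅x, y⁆ = bracket e x y) (x : g) {y : g}
    (hy0 : e.repr y 0 = 0) (hy1 : e.repr y 1 = 0) :
    ⁅x, y⁆ = (e.repr x 0 * e.repr y 2) • e 3
      + (e.repr x 0 * e.repr y 3 + e.repr x 1 * (e.repr y 2 + e.repr y 4)) • e 5 := by
  rw [he, bracket, hy0, hy1]
  module

theorem basis_two_mem_lowerCentralSeries_one (he : ∀ x y : g, ⁅x, y⁆ = bracket e x y) :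
    e 2 ∈ lowerCentralSeries ℝ g g 1 := by
  rw [show e 2 = ⁅e 0, e 1⁆ by simp [he, bracket]]
  exact lie_mem_lowerCentralSeries_succ _ (LieSubmodule.mem_top _)

theorem basis_three_mem_lowerCentralSeries_two (he : ∀ x y : g, ⁅x, y⁆ = bracket e x y) :
    e 3 ∈ lowerCentralSeries ℝ g g 2 := by
  rw [show e 3 = ⁅e 0, e 2⁆ by simp [he, bracket]]
  exact lie_mem_lowerCentralSeries_succ _ (basis_two_mem_lowerCentralSeries_one he)

theorem basis_five_mem_lowerCentralSeries_three (he : ∀ x y : g, ⁅x, y⁆ = bracket e x y) :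
    e 5 ∈ lowerCentralSeries ℝ g g 3 := by
  rw [show e 5 = ⁅e 0, e 3⁆ by simp [he, bracket]]
  exact lie_mem_lowerCentralSeries_succ _ (basis_three_mem_lowerCentralSeries_two he)

variable {n : ℕ} {b : Basis (Fin n) ℝ g}

theorem exists_basis_repr_two_ne_zero (he : ∀ x y : g, ⁅x, y⁆ = bracket e x y)
    (hb : ∀ i j, ∃ k, ∃ c : ℝ, ⁅b i, b j⁆ = c • b k) :
    ∃ u, e.repr (b u) 0 = 0 ∧ e.repr (b u) 1 = 0 ∧ e.repr (b u) 4 = 0 ∧ e.repr (b u) 2 ≠ 0 := by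
  obtain ⟨u, hu, hu2⟩ := exists_basis_mem_lowerCentralSeries_apply_ne_zero hb
    (basis_two_mem_lowerCentralSeries_one he) (e.coord 2) (by simp)
  have hu := Finsupp.support_subset_iff.mp (e.mem_span_image.mp (mem_span_two_three_five he hu))
  exact ⟨u, hu 0 (by simp), hu 1 (by simp), hu 4 (by simp), by simpa using hu2⟩

theorem exists_basis_eq_smul_add_smul (he : ∀ x y : g, ⁅x, y⁆ = bracket e x y)
    (hb : ∀ i j, ∃ k, ∃ c : ℝ, ⁅b i, b j⁆ = c • b k) :
    ∃ v, ∃ p q : ℝ, p ≠ 0 ∧ b v = p • e 3 + q • e 5 := by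
  obtain ⟨v, hv, hv3⟩ := exists_basis_mem_lowerCentralSeries_apply_ne_zero hb
    (basis_three_mem_lowerCentralSeries_two he) (e.coord 3) (by simp)
  obtain ⟨p, q, hpq⟩ := mem_span_pair.mp (by simpa [image_pair] using mem_span_three_five he hv)
  refine ⟨v, p, q, ?_, hpq.symm⟩
  rintro rfl
  simp [← hpq] at hv3

theorem exists_basis_eq_smul (he : ∀ x y : g, ⁅x, y⁆ = bracket e x y)
    (hb : ∀ i j, ∃ k, ∃ c : ℝ, ⁅b i, b j⁆ = c • b k) :
    ∃ w, ∃ s : ℝ, s ≠ 0 ∧ b w = s • e 5 := by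
  obtain ⟨w, hw, hw5⟩ := exists_basis_mem_lowerCentralSeries_apply_ne_zero hb
    (basis_five_mem_lowerCentralSeries_three he) (e.coord 5) (by simp)
  obtain ⟨s, hs⟩ := mem_span_singleton.mp (by simpa [image_singleton] using mem_span_five he hw)
  refine ⟨w, s, ?_, hs.symm⟩
  rintro rfl
  simp [← hs] at hw5

variable {v w : Fin n} {p q s : ℝ}

theorem eq_of_repr_zero_ne_zero (he : ∀ x y : g, ⁅x, y⁆ = bracket e x y) (hb : IsNiceBasis b)
    (hp : p ≠ 0) (hs : s ≠ 0) (hv : b v = p • e 3 + q • e 5) (hw : b w = s • e 5)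
    {j j' : Fin n} (hj : e.repr (b j) 0 ≠ 0) (hj' : e.repr (b j') 0 ≠ 0) : j = j' := by
  have key : ∀ j, structConst b v j w = -(e.repr (b j) 0 * p / s) := by
    intro j
    rw [structConst, ← lie_skew, lie_eq_of_repr_zero_one he _ (by simp [hv]) (by simp [hv]),
      map_neg, b.repr_smul_add_smul hp hs hv hw]
    simp [hv]
  exact hb.2 v w j j' (by simp [key, hj, hp, hs]) (by simp [key, hj', hp, hs])

theorem eq_of_repr_one_ne_zero (he : ∀ x y : g, ⁅x, y⁆ = bracket e x y) (hb : IsNiceBasis b)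
    (hp : p ≠ 0) (hs : s ≠ 0) (hv : b v = p • e 3 + q • e 5) (hw : b w = s • e 5) {u : Fin n}
    (hu0 : e.repr (b u) 0 = 0) (hu1 : e.repr (b u) 1 = 0) (hu4 : e.repr (b u) 4 = 0)
    (hu2 : e.repr (b u) 2 ≠ 0) {j j' : Fin n} (hj0 : e.repr (b j) 0 = 0)
    (hj'0 : e.repr (b j') 0 = 0) (hj : e.repr (b j) 1 ≠ 0) (hj' : e.repr (b j') 1 ≠ 0) :
    j = j' := by
  have key : ∀ j, e.repr (b j) 0 = 0 →
      structConst b u j w = -(e.repr (b j) 1 * e.repr (b u) 2 / s) := by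
    intro j hj0
    rw [structConst, ← lie_skew, lie_eq_of_repr_zero_one he _ hu0 hu1, map_neg,
      b.repr_smul_add_smul hp hs hv hw]
    simp [hj0, hu4]
  exact hb.2 u w j j' (by simp [key j hj0, hj, hu2, hs]) (by simp [key j' hj'0, hj', hu2, hs])

theorem eq_or_eq_or_eq_of_repr_zero_one (he : ∀ x y : g, ⁅x, y⁆ = bracket e x y)
    (hb : IsNiceBasis b) (hp : p ≠ 0) (hs : s ≠ 0) (hv : b v = p • e 3 + q • e 5)
    (hw : b w = s • e 5) {u a m t : Fin n}
    (hu0 : e.repr (b u) 0 = 0) (hu1 : e.repr (b u) 1 = 0) (hu4 : e.repr (b u) 4 = 0)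
    (hu2 : e.repr (b u) 2 ≠ 0) (ha : e.repr (b a) 0 ≠ 0) (hm0 : e.repr (b m) 0 = 0)
    (hm1 : e.repr (b m) 1 ≠ 0) (ht0 : e.repr (b t) 0 = 0) (ht1 : e.repr (b t) 1 = 0) :
    t = u ∨ t = v ∨ t = w := by
  by_contra! ⟨htu, htv, htw⟩
  have hvw : v ≠ w := by
    rintro rfl
    simpa [hp] using congrArg (e.repr · 3) (hv.symm.trans hw)
  have hrepr := b.repr_smul_add_smul hp hs hv hw
  -- `ad (b m)` separates `b t` from `b u` in the `b w`-coordinate, `ad (b a)` in the `b v`-one.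
  have h24 : e.repr (b t) 2 + e.repr (b t) 4 = 0 := by
    by_contra h
    refine htu (hb.2 m w t u ?_ ?_) <;>
      rw [structConst, lie_eq_of_repr_zero_one he _ ‹_› ‹_›, hrepr] <;> simp [*]
  have h2 : e.repr (b t) 2 = 0 := by
    by_contra h
    refine htu (hb.2 a v t u ?_ ?_) <;>
      rw [structConst, lie_eq_of_repr_zero_one he _ ‹_› ‹_›, hrepr] <;> simp [*]
  have hbt : b t = e.repr (b t) 3 • e 3 + e.repr (b t) 5 • e 5 := by
    conv_lhs => rw [← e.sum_repr (b t), Fin.sum_univ_six]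
    rw [ht0, ht1, h2, show e.repr (b t) 4 = 0 by linarith]
    simp
  simpa [hrepr, Finsupp.single_apply, htv.symm, htw.symm] using congrArg (b.repr · t) hbt

end N614

/-- The 6-dimensional nilpotent Lie algebra `N_{6,1,4}`, given by
`(0, 0, e¹², e¹³, 0, e¹⁴ + e²³ + e²⁵)`, does not admit a nice basis. -/
theorem N614_admits_no_nice_basis
    (g : Type*) [LieRing g] [LieAlgebra ℝ g]
    (e : Module.Basis (Fin 6) ℝ g)
    (h12 : ⁅e 0, e 1⁆ = e 2) (h13 : ⁅e 0, e 2⁆ = e 3)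
    (h14 : ⁅e 0, e 3⁆ = e 5) (h23 : ⁅e 1, e 2⁆ = e 5) (h25 : ⁅e 1, e 4⁆ = e 5)
    (h0 : ∀ i j : Fin 6, i < j →
      (i, j) ∉ ({(0, 1), (0, 2), (0, 3), (1, 2), (1, 4)} : Set (Fin 6 × Fin 6)) →
      ⁅e i, e j⁆ = 0) :
    ¬ ∃ (n : ℕ) (b : Module.Basis (Fin n) ℝ g), IsNiceBasis b := by
  rintro ⟨n, b, hb⟩
  have he := N614.lie_eq_bracket h12 h13 h14 h23 h25 h0
  obtain ⟨u, hu0, hu1, hu4, hu2⟩ := N614.exists_basis_repr_two_ne_zero he hb.1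
  obtain ⟨v, p, q, hp, hv⟩ := N614.exists_basis_eq_smul_add_smul he hb.1
  obtain ⟨w, s, hs, hw⟩ := N614.exists_basis_eq_smul he hb.1
  obtain ⟨_, ⟨a, rfl⟩, ha⟩ :=
    exists_mem_apply_ne_zero_of_mem_span (e.coord 0) (b.mem_span (e 0)) (by simp)
  have hzero : ∀ j ≠ a, e.repr (b j) 0 = 0 := fun j hja => by
    by_contra h
    exact hja (N614.eq_of_repr_zero_ne_zero he hb hp hs hv hw h ha)
  obtain ⟨m, hma, hm1⟩ := e.exists_ne_repr_ne_zero b (i₁ := 1) (by decide) ha hzero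
  have hn : n = 6 := by simpa using (finrank_eq_card_basis b).symm.trans (finrank_eq_card_basis e)
  obtain ⟨t, -, ht⟩ := Finset.exists_mem_notMem_of_card_lt_card (s := {a, m, u, v, w})
    (t := .univ) (by simpa [hn] using Finset.card_le_five.trans_lt (by norm_num))
  simp only [Finset.mem_insert, Finset.mem_singleton, not_or] at ht
  obtain ⟨hta, htm, htu, htv, htw⟩ := ht
  have ht1 : e.repr (b t) 1 = 0 := by
    by_contra h
    exact htm (N614.eq_of_repr_one_ne_zero he hb hp hs hv hw hu0 hu1 hu4 hu2 (hzero t hta)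
      (hzero m hma) h hm1)
  rcases N614.eq_or_eq_or_eq_of_repr_zero_one he hb hp hs hv hw hu0 hu1 hu4 hu2 ha
    (hzero m hma) hm1 (hzero t hta) ht1 with h | h | h
  exacts [htu h, htv h, htw h]
end

section
/- Let g be the 6-dimensional real Lie algebra with basis e_1, …, e_6 whose only nonzero brackets of basis vectors (up to antisymmetry) are ⁅e_1, e_2⁆ = e_5 and ⁅e_3, e_4⁆ = e_6 (so g ≅ N_{3,2} ⊕ N_{3,2}). Then: (a) g admits a basis f_1, …, f_6 whose only nonzero brackets of basis vectors (up to antisymmetry) are ⁅f_1, f_3⁆ = f_5, ⁅f_2, f_4⁆ = f_5, ⁅f_1, f_2⁆ = f_6, ⁅f_3, f_4⁆ = f_6; (b) both (e_i) and (f_i) are nice bases of g; and (c) the two bases are not equivalent: there is no Lie algebra automorphism φ of g, permutation σ of {1,…,6}, and nonzero reals λ_1, …, λ_6 with φ(e_i) = λ_i • f_{σ(i)} for all i. -/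
/-!
In both bases every bracket of two basis vectors is `0` or `±` a basis vector, so niceness is
a finite check on the table of brackets, and an explicit change of basis turns the first table
into the second. An equivalence of bases sends basis vectors to nonzero multiples of basis
vectors, so it preserves which pairs of basis vectors commute; hence the number of ordered
pairs with a nonzero bracket is an invariant, and it is `4` for the first basis and `8` for the
second.
-/

open Module

/-- `T i j = some k` encodes `⁅b i, b j⁆ = b k` and `T i j = none` encodes `⁅b i, b j⁆ = 0`;
only the entries with `i < j` are read. -/
abbrev BracketTable (n : ℕ) := Fin n → Fin n → Option (Fin n)

namespace BracketTable

variable {n : ℕ} (T : BracketTable n)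

def IsStrictUpper : Prop := ∀ i j, T i j ≠ none → i < j

def IsNice : Prop :=
  ∀ i k j j', (T i j = some k ∨ T j i = some k) → (T i j' = some k ∨ T j' i = some k) → j = j'

open Finset in
def numNonzero : ℕ := #{p : Fin n × Fin n | T p.1 p.2 ≠ none ∨ T p.2 p.1 ≠ none}

instance : Decidable T.IsStrictUpper := by unfold IsStrictUpper; infer_instance

instance : Decidable T.IsNice := by unfold IsNice; infer_instance

variable {T}

theorem IsStrictUpper.eq_none_of_not_lt (hT : T.IsStrictUpper) {i j : Fin n} (h : ¬ i < j) :
    T i j = none :=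
  not_not.mp fun hne => h (hT i j hne)

theorem IsStrictUpper.eq_none_or_eq_none (hT : T.IsStrictUpper) (i j : Fin n) :
    T i j = none ∨ T j i = none := by
  rcases lt_or_ge i j with h | h
  · exact .inr (hT.eq_none_of_not_lt h.not_gt)
  · exact .inl (hT.eq_none_of_not_lt h.not_gt)

end BracketTable

theorem Module.Basis.repr_optionElim_apply {ι R M : Type*} [DecidableEq ι] [Semiring R]
    [AddCommMonoid M] [Module R M] (b : Basis ι R M) (o : Option ι) (k : ι) :
    b.repr (o.elim 0 b) k = if o = some k then 1 else 0 := by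
  cases o with
  | none => simp
  | some m => simp [Finsupp.single_apply]

section HasBrackets

variable {R L : Type*} [CommRing R] [LieRing L] [LieAlgebra R L] {n : ℕ}

def Module.Basis.HasBrackets (b : Basis (Fin n) R L) (T : BracketTable n) : Prop :=
  ∀ i j, i < j → ⁅b i, b j⁆ = (T i j).elim 0 b

noncomputable def Module.Basis.numNonzeroBrackets (b : Basis (Fin n) R L) : ℕ :=
  Nat.card {p : Fin n × Fin n // ⁅b p.1, b p.2⁆ ≠ 0}

namespace Module.Basis.HasBrackets

variable {b : Basis (Fin n) R L} {T : BracketTable n}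

theorem lie_eq (hb : b.HasBrackets T) (hT : T.IsStrictUpper) (i j : Fin n) :
    ⁅b i, b j⁆ = (T i j).elim 0 b - (T j i).elim 0 b := by
  rcases lt_trichotomy i j with h | rfl | h
  · rw [hb i j h, hT.eq_none_of_not_lt h.asymm, Option.elim_none, sub_zero]
  · rw [lie_self, sub_self]
  · rw [← lie_skew, hb j i h, hT.eq_none_of_not_lt h.asymm, Option.elim_none, zero_sub]

theorem lie_eq_zero_iff [Nontrivial R] (hb : b.HasBrackets T) (hT : T.IsStrictUpper)
    (i j : Fin n) : ⁅b i, b j⁆ = 0 ↔ T i j = none ∧ T j i = none := by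
  rw [hb.lie_eq hT]
  rcases hT.eq_none_or_eq_none i j with h | h <;> rw [h] <;> cases T _ _ <;> simp [b.ne_zero]

theorem numNonzeroBrackets_eq [Nontrivial R] (hb : b.HasBrackets T) (hT : T.IsStrictUpper) :
    b.numNonzeroBrackets = T.numNonzero := by
  rw [numNonzeroBrackets, BracketTable.numNonzero, ← Fintype.card_subtype,
    ← Nat.card_eq_fintype_card]
  exact Nat.card_congr <| Equiv.subtypeEquivRight fun p => by
    rw [Ne, hb.lie_eq_zero_iff hT, not_and_or]

end Module.Basis.HasBrackets

end HasBrackets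

namespace Module.Basis.HasBrackets

variable {L : Type*} [LieRing L] [LieAlgebra ℝ L] {n : ℕ} {b : Basis (Fin n) ℝ L}
  {T : BracketTable n}

theorem eq_some_of_structConst_ne_zero (hb : b.HasBrackets T) (hT : T.IsStrictUpper)
    {i j k : Fin n} (h : structConst b i j k ≠ 0) : T i j = some k ∨ T j i = some k := by
  by_contra! hne
  simp [structConst, hb.lie_eq hT, repr_optionElim_apply, hne.1, hne.2] at h

theorem isNiceBasis (hb : b.HasBrackets T) (hT : T.IsStrictUpper) (hnice : T.IsNice) :
    IsNiceBasis b := by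
  refine ⟨fun i j => ?_, fun i k j j' h h' => hnice i k j j'
    (hb.eq_some_of_structConst_ne_zero hT h) (hb.eq_some_of_structConst_ne_zero hT h')⟩
  rw [hb.lie_eq hT]
  rcases hT.eq_none_or_eq_none i j with h | h <;> rw [h] <;> rcases T _ _ with _ | k
  · exact ⟨i, 0, by simp⟩
  · exact ⟨k, -1, by simp⟩
  · exact ⟨i, 0, by simp⟩
  · exact ⟨k, 1, by simp⟩

end Module.Basis.HasBrackets

section Equivalent

variable {K L : Type*} [Field K] [LieRing L] [LieAlgebra K L] {n : ℕ}

def Module.Basis.Equivalent (e f : Basis (Fin n) K L) : Prop :=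
  ∃ (φ : L ≃ₗ⁅K⁆ L) (σ : Equiv.Perm (Fin n)) (l : Fin n → K),
    (∀ i, l i ≠ 0) ∧ ∀ i, φ (e i) = l i • f (σ i)

namespace Module.Basis.Equivalent

variable {e f : Basis (Fin n) K L}

theorem exists_perm_lie_eq_zero_iff (h : e.Equivalent f) :
    ∃ σ : Equiv.Perm (Fin n), ∀ i j, ⁅e i, e j⁆ = 0 ↔ ⁅f (σ i), f (σ j)⁆ = 0 := by
  obtain ⟨φ, σ, l, hl, hφ⟩ := h
  refine ⟨σ, fun i j => ?_⟩
  have hφ_lie : φ ⁅e i, e j⁆ = (l i * l j) • ⁅f (σ i), f (σ j)⁆ := by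
    rw [LieEquiv.map_lie, hφ, hφ, smul_lie, lie_smul, smul_smul]
  rw [← AddEquivClass.map_eq_zero_iff (f := φ), hφ_lie, smul_eq_zero,
    or_iff_right (mul_ne_zero (hl i) (hl j))]

theorem numNonzeroBrackets_eq (h : e.Equivalent f) :
    e.numNonzeroBrackets = f.numNonzeroBrackets := by
  obtain ⟨σ, hσ⟩ := h.exists_perm_lie_eq_zero_iff
  exact Nat.card_congr <| (σ.prodCongr σ).subtypeEquiv fun p => (hσ p.1 p.2).not

end Module.Basis.Equivalent

end Equivalent

theorem Module.Basis.exists_eq_of_constr_inverse {ι R M : Type*} [CommSemiring R]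
    [AddCommMonoid M] [Module R M] (e : Basis ι R M) (v w : ι → M)
    (hvw : ∀ i, e.constr R v (w i) = e i) (hwv : ∀ i, e.constr R w (v i) = e i) :
    ∃ f : Basis ι R M, ⇑f = v :=
  ⟨e.map (.ofLinearMap (e.constr R v) (e.constr R w) (e.ext fun i => by simp [hvw])
    (e.ext fun i => by simp [hwv])), funext fun i => by simp⟩

/-- The table `(0,0,0,0,e¹²,e³⁴)` of `N_{3,2} ⊕ N_{3,2}`, indices shifted down by one. -/
def n32SumTable : BracketTable 6 := fun i j =>
  if (i, j) = (0, 1) then some 4 else if (i, j) = (2, 3) then some 5 else none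

/-- The table `(0,0,0,0,e¹³+e²⁴,e¹²+e³⁴)`, indices shifted down by one. -/
def n32SumTwistedTable : BracketTable 6 := fun i j =>
  if (i, j) = (0, 2) ∨ (i, j) = (1, 3) then some 4
  else if (i, j) = (0, 1) ∨ (i, j) = (2, 3) then some 5 else none

def twistedFamily {L : Type*} [AddCommGroup L] (e : Fin 6 → L) : Fin 6 → L :=
  ![e 0 + e 2, e 1 + e 3, e 1 - e 3, e 2 - e 0, e 4 - e 5, e 4 + e 5]

theorem exists_basis_eq_twistedFamily {K L : Type*} [Field K] [CharZero K] [AddCommGroup L]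
    [Module K L] (e : Basis (Fin 6) K L) : ∃ f : Basis (Fin 6) K L, ⇑f = twistedFamily e := by
  refine e.exists_eq_of_constr_inverse _
    ![(2⁻¹ : K) • (e 0 - e 3), (2⁻¹ : K) • (e 1 + e 2), (2⁻¹ : K) • (e 0 + e 3),
      (2⁻¹ : K) • (e 1 - e 2), (2⁻¹ : K) • (e 4 + e 5), (2⁻¹ : K) • (e 5 - e 4)] ?_ ?_ <;>
  intro i <;> fin_cases i <;> simp [twistedFamily, -Basis.constr_apply_fintype] <;> module

theorem Module.Basis.HasBrackets.twisted {R L : Type*} [CommRing R] [LieRing L]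
    [LieAlgebra R L] {e f : Basis (Fin 6) R L} (he : e.HasBrackets n32SumTable)
    (hf : ⇑f = twistedFamily e) :
    f.HasBrackets n32SumTwistedTable := by
  have he_lie := he.lie_eq (by decide)
  intro i j hij
  rw [hf]
  fin_cases i <;> fin_cases j <;> first
    | exact absurd hij (by decide)
    | simp [twistedFamily, lie_add, add_lie, lie_sub, sub_lie, he_lie, n32SumTable,
        n32SumTwistedTable] <;> module

/-- The Lie algebra `N_{3,2} ⊕ N_{3,2}` in its standard nice basis `62:2`
`(0,0,0,0,e¹²,e³⁴)` admits a second, inequivalent nice basis with brackets as in `62:4a`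
`(0,0,0,0,e¹³+e²⁴,e¹²+e³⁴)`. -/
theorem two_inequivalent_nice_bases_on_N32_plus_N32
    (g : Type*) [LieRing g] [LieAlgebra ℝ g]
    (e : Module.Basis (Fin 6) ℝ g)
    (h12 : ⁅e 0, e 1⁆ = e 4) (h34 : ⁅e 2, e 3⁆ = e 5)
    (h0 : ∀ i j : Fin 6, i < j →
      (i, j) ∉ ({(0, 1), (2, 3)} : Set (Fin 6 × Fin 6)) → ⁅e i, e j⁆ = 0) :
    IsNiceBasis e ∧
    ∃ f : Module.Basis (Fin 6) ℝ g,
      (⁅f 0, f 2⁆ = f 4 ∧ ⁅f 1, f 3⁆ = f 4 ∧ ⁅f 0, f 1⁆ = f 5 ∧ ⁅f 2, f 3⁆ = f 5 ∧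
        (∀ i j : Fin 6, i < j →
          (i, j) ∉ ({(0, 2), (1, 3), (0, 1), (2, 3)} : Set (Fin 6 × Fin 6)) →
          ⁅f i, f j⁆ = 0)) ∧
      IsNiceBasis f ∧
      ¬ ∃ (φ : g ≃ₗ⁅ℝ⁆ g) (σ : Equiv.Perm (Fin 6)) (l : Fin 6 → ℝ),
          (∀ i, l i ≠ 0) ∧ ∀ i, φ (e i) = l i • f (σ i) := by
  have he : e.HasBrackets n32SumTable := by
    intro i j hij
    by_cases hmem : (i, j) ∈ ({(0, 1), (2, 3)} : Set (Fin 6 × Fin 6))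
    · obtain h | h := hmem <;> obtain ⟨rfl, rfl⟩ := Prod.mk.inj h
      exacts [h12, h34]
    · rw [h0 i j hij hmem]
      simp only [Set.mem_insert_iff, Set.mem_singleton_iff, not_or] at hmem
      simp [n32SumTable, hmem.1, hmem.2]
  obtain ⟨f, hf⟩ := exists_basis_eq_twistedFamily e
  have hf' := he.twisted hf
  refine ⟨he.isNiceBasis (by decide) (by decide), f, ⟨hf' 0 2 (by decide), hf' 1 3 (by decide),
    hf' 0 1 (by decide), hf' 2 3 (by decide), fun i j hij hmem => ?_⟩,
    hf'.isNiceBasis (by decide) (by decide), fun hequiv : e.Equivalent f => ?_⟩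
  · simp only [Set.mem_insert_iff, Set.mem_singleton_iff, not_or] at hmem
    simp [hf' i j hij, n32SumTwistedTable, hmem.1, hmem.2.1, hmem.2.2.1, hmem.2.2.2]
  · have hcount := hequiv.numNonzeroBrackets_eq
    rw [he.numNonzeroBrackets_eq (by decide), hf'.numNonzeroBrackets_eq (by decide)] at hcount
    exact absurd hcount (by decide)
end

section
/- Let g be the 6-dimensional real Lie algebra with basis e_1, …, e_6 whose only nonzero brackets of basis vectors (up to antisymmetry) are ⁅e_1,e_2⁆ = e_4, ⁅e_1,e_3⁆ = e_5, ⁅e_1,e_4⁆ = e_5, ⁅e_2,e_4⁆ = e_6 (this is the Lie algebra N_{6,2,9}; note that the basis (e_i) is not nice, since ⁅e_1,e_3⁆ and ⁅e_1,e_4⁆ are both proportional to e_5). Then g admits a nice basis: there is a basis f_1, …, f_6 of g whose only nonzero brackets of basis vectors (up to antisymmetry) are ⁅f_1,f_2⁆ = f_4, ⁅f_1,f_4⁆ = f_5, ⁅f_2,f_3⁆ = f_5, ⁅f_1,f_3⁆ = f_6, ⁅f_2,f_4⁆ = f_6, and this basis is nice. -/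
/-!
With the paper's indexing (Lean's `e 0` is `e₁`), put `f₁ = e₁ + e₂`, `f₂ = e₁ - e₂`,
`f₃ = -4e₃ + 2e₄`, `f₄ = -2e₄`, `f₅ = -2(e₅ + e₆)`, `f₆ = -2(e₅ - e₆)`. As `e₅, e₆` are central,
so are `f₅, f₆`, and expanding the six brackets among `f₁, …, f₄` gives the structure equations
`(0,0,0,f¹²,f¹⁴+f²³,f¹³+f²⁴)`. There every bracket `⁅fᵢ, fⱼ⁆` is `0` or `±f_κ(i,j)`, and for fixed
`i` the index `κ(i,j)` differs for the different `j` with nonzero bracket: that is niceness.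
-/

open LieAlgebra LieModule

theorem lie_eq_zsmul_of_forall_lt {ι L : Type*} [LinearOrder ι] [LieRing L] (b : ι → L)
    (c : ι → ι → ℤ) (κ : ι → ι → ι) (hc : ∀ i j, c j i = -c i j) (hκ : ∀ i j, κ j i = κ i j)
    (h : ∀ i j, i < j → ⁅b i, b j⁆ = c i j • b (κ i j)) (i j : ι) :
    ⁅b i, b j⁆ = c i j • b (κ i j) := by
  rcases lt_trichotomy i j with hij | rfl | hij
  · exact h i j hij
  · have : c i i = 0 := by linarith [hc i i]
    simp [this]
  · rw [← lie_skew, h j i hij, hc j i, hκ j i, neg_smul]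

theorem mem_center_of_forall_lie_basis {ι R L : Type*} [CommRing R] [LieRing L]
    [LieAlgebra R L] (b : Module.Basis ι R L) {x : L} (h : ∀ i, ⁅b i, x⁆ = 0) :
    x ∈ center R L := by
  rw [mem_maxTrivSubmodule]
  intro y
  rw [← b.linearCombination_repr y, Finsupp.linearCombination_apply, Finsupp.sum, sum_lie]
  simp [h]

theorem Module.Basis.map_toLinearEquiv_apply {ι R M : Type*} [Fintype ι] [DecidableEq ι]
    [CommRing R] [AddCommGroup M] [Module R M] (e : Module.Basis ι R M) (A : Matrix ι ι R)
    (hA : IsUnit A.det) (i : ι) :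
    e.map (A.toLinearEquiv e hA) i = ∑ j, A j i • e j := by
  simp [Matrix.toLin_self]

theorem isNiceBasis_of_lie_eq_zsmul {g : Type*} [LieRing g] [LieAlgebra ℝ g] {n : ℕ}
    (b : Module.Basis (Fin n) ℝ g) (c : Fin n → Fin n → ℤ)
    (κ : Fin n → Fin n → Fin n) (hb : ∀ i j, ⁅b i, b j⁆ = c i j • b (κ i j))
    (hκ : ∀ i j j', c i j ≠ 0 → c i j' ≠ 0 → κ i j = κ i j' → j = j') :
    IsNiceBasis b := by
  have hsc : ∀ i j k, structConst b i j k ≠ 0 → c i j ≠ 0 ∧ κ i j = k := by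
    intro i j k h
    rw [structConst, hb, map_zsmul, Finsupp.smul_apply, Module.Basis.repr_self,
      Finsupp.single_apply] at h
    split_ifs at h with hk
    · exact ⟨fun hc => h (by simp [hc]), hk⟩
    · simp at h
  refine ⟨fun i j => ⟨κ i j, c i j, by rw [hb, Int.cast_smul_eq_zsmul]⟩, fun i k j j' hj hj' => ?_⟩
  obtain ⟨hcj, rfl⟩ := hsc i j k hj
  obtain ⟨hcj', hκj'⟩ := hsc i j' _ hj'
  exact hκ i j j' hcj hcj' hκj'.symm

namespace N629

/-- The structure equations read `⁅f i, f j⁆ = bracketCoeff i j • f (bracketIndex i j)`;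
the index is irrelevant where the coefficient vanishes. -/
def bracketCoeff : Fin 6 → Fin 6 → ℤ :=
  ![![0, 1, 1, 1, 0, 0], ![-1, 0, 1, 1, 0, 0], ![-1, -1, 0, 0, 0, 0], ![-1, -1, 0, 0, 0, 0],
    ![0, 0, 0, 0, 0, 0], ![0, 0, 0, 0, 0, 0]]

def bracketIndex : Fin 6 → Fin 6 → Fin 6 :=
  ![![0, 3, 5, 4, 0, 0], ![3, 0, 4, 5, 0, 0], ![5, 4, 0, 0, 0, 0], ![4, 5, 0, 0, 0, 0],
    ![0, 0, 0, 0, 0, 0], ![0, 0, 0, 0, 0, 0]]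

variable {g : Type*} [LieRing g] [LieAlgebra ℝ g]

theorem isNiceBasis_of_structure_equations (f : Module.Basis (Fin 6) ℝ g)
    (h12 : ⁅f 0, f 1⁆ = f 3) (h14 : ⁅f 0, f 3⁆ = f 4) (h23 : ⁅f 1, f 2⁆ = f 4)
    (h13 : ⁅f 0, f 2⁆ = f 5) (h24 : ⁅f 1, f 3⁆ = f 5)
    (h0 : ∀ i j : Fin 6, i < j →
      (i, j) ∉ ({(0, 1), (0, 3), (1, 2), (0, 2), (1, 3)} : Set (Fin 6 × Fin 6)) →
      ⁅f i, f j⁆ = 0) :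
    IsNiceBasis f := by
  have hlt : ∀ i j, i < j → ⁅f i, f j⁆ = bracketCoeff i j • f (bracketIndex i j) := by
    intro i j hij
    fin_cases i <;> fin_cases j <;>
      simp [bracketCoeff, bracketIndex, h12, h14, h23, h13, h24] at hij ⊢ <;>
      exact h0 _ _ (by decide) (by simp)
  exact isNiceBasis_of_lie_eq_zsmul f bracketCoeff bracketIndex
    (lie_eq_zsmul_of_forall_lt f _ _ (by decide) (by decide) hlt) (by decide)

def changeOfBasis : Matrix (Fin 6) (Fin 6) ℝ :=
  !![1, 1, 0, 0, 0, 0; 1, -1, 0, 0, 0, 0; 0, 0, -4, 0, 0, 0; 0, 0, 2, -2, 0, 0;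
    0, 0, 0, 0, -2, -2; 0, 0, 0, 0, -2, 2]

set_option maxRecDepth 8000 in
theorem det_changeOfBasis : changeOfBasis.det = 128 := by
  simp [changeOfBasis, Matrix.det_succ_row_zero, Fin.sum_univ_succ]
  simp [Fin.succAbove, Fin.lt_def]
  norm_num

noncomputable def niceBasis (e : Module.Basis (Fin 6) ℝ g) : Module.Basis (Fin 6) ℝ g :=
  e.map (changeOfBasis.toLinearEquiv e (by rw [det_changeOfBasis]; norm_num))

theorem coe_niceBasis (e : Module.Basis (Fin 6) ℝ g) :
    ⇑(niceBasis e) = ![e 0 + e 1, e 0 - e 1, (-4 : ℝ) • e 2 + (2 : ℝ) • e 3, (-2 : ℝ) • e 3,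
      (-2 : ℝ) • e 4 + (-2 : ℝ) • e 5, (-2 : ℝ) • e 4 + (2 : ℝ) • e 5] := by
  funext i
  rw [niceBasis, Module.Basis.map_toLinearEquiv_apply, Fin.sum_univ_six]
  fin_cases i <;> simp [changeOfBasis, sub_eq_add_neg]

theorem mem_center_of_four_le (e : Module.Basis (Fin 6) ℝ g)
    (h0 : ∀ i j : Fin 6, i < j →
      (i, j) ∉ ({(0, 1), (0, 2), (0, 3), (1, 3)} : Set (Fin 6 × Fin 6)) →
      ⁅e i, e j⁆ = 0)
    {k : Fin 6} (hk : 4 ≤ k) : e k ∈ center ℝ g := by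
  have hnot : ∀ i j : Fin 6, 4 ≤ j →
      (i, j) ∉ ({(0, 1), (0, 2), (0, 3), (1, 3)} : Set (Fin 6 × Fin 6)) := by
    intro i j hj
    simp only [Set.mem_insert_iff, Set.mem_singleton_iff, Prod.ext_iff]
    omega
  refine mem_center_of_forall_lie_basis e fun i => ?_
  rcases lt_trichotomy i k with hik | rfl | hki
  · exact h0 i k hik (hnot i k hk)
  · exact lie_self _
  · rw [← lie_skew, h0 k i hki (hnot k i (hk.trans hki.le)), neg_zero]

theorem niceBasis_mem_center (e : Module.Basis (Fin 6) ℝ g)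
    (h0 : ∀ i j : Fin 6, i < j →
      (i, j) ∉ ({(0, 1), (0, 2), (0, 3), (1, 3)} : Set (Fin 6 × Fin 6)) →
      ⁅e i, e j⁆ = 0)
    {k : Fin 6} (hk : 4 ≤ k) : niceBasis e k ∈ center ℝ g := by
  have he4 := mem_center_of_four_le e h0 (k := 4) le_rfl
  have he5 := mem_center_of_four_le e h0 (k := 5) (by decide)
  obtain rfl | rfl : k = 4 ∨ k = 5 := by omega
  all_goals
    simp only [coe_niceBasis, Matrix.cons_val]
    exact add_mem ((center ℝ g).smul_mem _ he4) ((center ℝ g).smul_mem _ he5)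

theorem niceBasis_structure_equations (e : Module.Basis (Fin 6) ℝ g)
    (h12 : ⁅e 0, e 1⁆ = e 3) (h13 : ⁅e 0, e 2⁆ = e 4)
    (h14 : ⁅e 0, e 3⁆ = e 4) (h24 : ⁅e 1, e 3⁆ = e 5)
    (h0 : ∀ i j : Fin 6, i < j →
      (i, j) ∉ ({(0, 1), (0, 2), (0, 3), (1, 3)} : Set (Fin 6 × Fin 6)) →
      ⁅e i, e j⁆ = 0) :
    let f := niceBasis e
    ⁅f 0, f 1⁆ = f 3 ∧ ⁅f 0, f 3⁆ = f 4 ∧ ⁅f 1, f 2⁆ = f 4 ∧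
      ⁅f 0, f 2⁆ = f 5 ∧ ⁅f 1, f 3⁆ = f 5 ∧
      ∀ i j : Fin 6, i < j →
        (i, j) ∉ ({(0, 1), (0, 3), (1, 2), (0, 2), (1, 3)} : Set (Fin 6 × Fin 6)) →
        ⁅f i, f j⁆ = 0 := by
  have h21 : ⁅e 1, e 0⁆ = -e 3 := by rw [← lie_skew, h12]
  have z23 : ⁅e 1, e 2⁆ = 0 := h0 1 2 (by decide) (by simp)
  have z34 : ⁅e 2, e 3⁆ = 0 := h0 2 3 (by decide) (by simp)
  intro f
  have h34 : ⁅f 2, f 3⁆ = 0 := by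
    simp only [f, coe_niceBasis, Matrix.cons_val, add_lie, smul_lie, lie_smul, lie_self, z34]
    module
  have hzero : ∀ i j : Fin 6, i < j →
      (i, j) ∉ ({(0, 1), (0, 3), (1, 2), (0, 2), (1, 3)} : Set (Fin 6 × Fin 6)) →
      ⁅f i, f j⁆ = 0 := by
    intro i j hij hmem
    fin_cases i <;> fin_cases j <;> dsimp only [Fin.reduceFinMk] at hij hmem ⊢
    all_goals first
      | exact (mem_maxTrivSubmodule _ _ _ _).1 (niceBasis_mem_center e h0 (by decide)) _
      | exact h34
      | exact absurd hij (by decide)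
      | simp at hmem
  refine ⟨?_, ?_, ?_, ?_, ?_, hzero⟩ <;>
    simp only [f, coe_niceBasis, Matrix.cons_val, lie_add, add_lie, lie_sub, sub_lie, lie_smul,
      lie_self, h12, h13, h14, h24, h21, z23] <;>
    module

end N629

/-- The Lie algebra `N_{6,2,9}`, given by `(0,0,0,e¹²,e¹³+e¹⁴,e²⁴)`, admits a nice basis,
namely one with structure equations `(0,0,0,e¹²,e¹⁴+e²³,e¹³+e²⁴)`. -/
theorem N629_admits_nice_basis
    (g : Type*) [LieRing g] [LieAlgebra ℝ g]
    (e : Module.Basis (Fin 6) ℝ g)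
    (h12 : ⁅e 0, e 1⁆ = e 3) (h13 : ⁅e 0, e 2⁆ = e 4)
    (h14 : ⁅e 0, e 3⁆ = e 4) (h24 : ⁅e 1, e 3⁆ = e 5)
    (h0 : ∀ i j : Fin 6, i < j →
      (i, j) ∉ ({(0, 1), (0, 2), (0, 3), (1, 3)} : Set (Fin 6 × Fin 6)) →
      ⁅e i, e j⁆ = 0) :
    ∃ f : Module.Basis (Fin 6) ℝ g,
      (⁅f 0, f 1⁆ = f 3 ∧ ⁅f 0, f 3⁆ = f 4 ∧ ⁅f 1, f 2⁆ = f 4 ∧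
        ⁅f 0, f 2⁆ = f 5 ∧ ⁅f 1, f 3⁆ = f 5 ∧
        (∀ i j : Fin 6, i < j →
          (i, j) ∉ ({(0, 1), (0, 3), (1, 2), (0, 2), (1, 3)} : Set (Fin 6 × Fin 6)) →
          ⁅f i, f j⁆ = 0)) ∧
      IsNiceBasis f := by
  obtain ⟨hf12, hf14, hf23, hf13, hf24, hf0⟩ :=
    N629.niceBasis_structure_equations e h12 h13 h14 h24 h0
  exact ⟨N629.niceBasis e, ⟨hf12, hf14, hf23, hf13, hf24, hf0⟩,
    N629.isNiceBasis_of_structure_equations _ hf12 hf14 hf23 hf13 hf24 hf0⟩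
end

section
/- Let g be a finite-dimensional real Lie algebra with a nice basis (e_1, …, e_n) and structure constants c_{ijk} (the coefficient of e_k in ⁅e_i, e_j⁆). If x = (x_1, …, x_n) ∈ ℝⁿ satisfies x_i + x_j = x_k for every triple (i,j,k) with c_{ijk} ≠ 0, then the linear map D : g → g defined by D(e_i) = x_i • e_i is a derivation of g. -/
/-!
Both sides of the Leibniz rule are bilinear in `(u, v)`, so it suffices to check it on pairs of
basis vectors. There `D ⁅e_i, e_j⁆ = ∑ₖ x_k c_{ijk} e_k` while `⁅D e_i, e_j⁆ + ⁅e_i, D e_j⁆ =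
∑ₖ (x_i + x_j) c_{ijk} e_k`, and the coefficients agree because `x_k = x_i + x_j` whenever
`c_{ijk} ≠ 0`.
-/

namespace Module.Basis

variable {R L ι : Type*} [CommRing R] [LieRing L] [LieAlgebra R L] (b : Basis ι R L)

theorem leibniz_of_leibniz_basis (D : L →ₗ[R] L)
    (h : ∀ i j, D ⁅b i, b j⁆ = ⁅D (b i), b j⁆ + ⁅b i, D (b j)⁆) (u v : L) :
    D ⁅u, v⁆ = ⁅D u, v⁆ + ⁅u, D v⁆ := by
  let bracket : L →ₗ[R] L →ₗ[R] L := LieModule.toEnd R L L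
  have hB : LinearMap.llcomp R L L L D ∘ₗ bracket = bracket ∘ₗ D + bracket.compl₂ D :=
    LinearMap.ext_basis b b h
  exact LinearMap.congr_fun₂ hB u v

theorem repr_constr_smul_self (x : ι → R) (w : L) (k : ι) :
    b.repr (b.constr R (fun i => x i • b i) w) k = x k * b.repr w k := by
  have h : Finsupp.lapply k ∘ₗ b.repr.toLinearMap ∘ₗ b.constr R (fun i => x i • b i) =
      x k • (Finsupp.lapply k ∘ₗ b.repr.toLinearMap) := by
    refine b.ext fun i => ?_
    by_cases hik : i = k
    · subst hik; simp
    · simp [Finsupp.single_eq_of_ne' hik]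
  exact LinearMap.congr_fun h w

theorem constr_smul_self_lie_basis (x : ι → R)
    (hx : ∀ i j k, b.repr ⁅b i, b j⁆ k ≠ 0 → x i + x j = x k) (i j : ι) :
    b.constr R (fun i => x i • b i) ⁅b i, b j⁆ =
      ⁅b.constr R (fun i => x i • b i) (b i), b j⁆ +
        ⁅b i, b.constr R (fun i => x i • b i) (b j)⁆ := by
  simp only [constr_basis, smul_lie, lie_smul, ← add_smul]
  refine b.ext_elem fun k => ?_
  rw [repr_constr_smul_self, map_smul, Finsupp.smul_apply, smul_eq_mul]
  by_cases hc : b.repr ⁅b i, b j⁆ k = 0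
  · simp [hc]
  · rw [hx i j k hc]

end Module.Basis

theorem diagonal_derivation_of_root_matrix_kernel_general
    (g : Type*) [LieRing g] [LieAlgebra ℝ g]
    {n : ℕ} (b : Module.Basis (Fin n) ℝ g)
    (x : Fin n → ℝ)
    (hx : ∀ i j k, structConst b i j k ≠ 0 → x i + x j = x k) :
    ∀ u v : g,
      (b.constr ℝ fun i => x i • b i) ⁅u, v⁆ =
        ⁅(b.constr ℝ fun i => x i • b i) u, v⁆ +
        ⁅u, (b.constr ℝ fun i => x i • b i) v⁆ :=
  b.leibniz_of_leibniz_basis _ (b.constr_smul_self_lie_basis x hx)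

/-- Any element of the kernel of the root matrix of a nice basis defines a diagonal
derivation: if `x_i + x_j = x_k` whenever `c_{ijk} ≠ 0`, then `e_i ↦ x_i • e_i` is a
derivation. -/
theorem diagonal_derivation_of_root_matrix_kernel
    (g : Type*) [LieRing g] [LieAlgebra ℝ g] [FiniteDimensional ℝ g]
    {n : ℕ} (b : Module.Basis (Fin n) ℝ g) (hb : IsNiceBasis b)
    (x : Fin n → ℝ)
    (hx : ∀ i j k, structConst b i j k ≠ 0 → x i + x j = x k) :
    ∀ u v : g,
      (b.constr ℝ fun i => x i • b i) ⁅u, v⁆ =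
        ⁅(b.constr ℝ fun i => x i • b i) u, v⁆ +
        ⁅u, (b.constr ℝ fun i => x i • b i) v⁆ :=
  diagonal_derivation_of_root_matrix_kernel_general g b x hx
end

section
/- Let g be a finite-dimensional real nilpotent Lie algebra with a nice basis (e_1, …, e_n) and structure constants c_{ijk} (the coefficient of e_k in ⁅e_i, e_j⁆). Consider the finite family of root vectors α_{ijk} = ε_k − ε_i − ε_j ∈ ℝⁿ, one for each triple (i,j,k) with i < j and c_{ijk} ≠ 0, where ε_1, …, ε_n is the standard basis of ℝⁿ. If this family of vectors is linearly independent over ℝ, then ⁅e_k, ⁅e_i, e_j⁆⁆ = 0 for all indices i, j and all k with k ≠ i and k ≠ j (i.e., the nice diagram of (g, (e_i)) has no double arrows). -/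
theorem LieModule.eq_zero_of_lie_eq_smul {R L M : Type*} [CommRing R] [IsDomain R] [LieRing L]
    [LieAlgebra R L] [AddCommGroup M] [Module R M] [Module.IsTorsionFree R M] [LieRingModule L M]
    [LieModule R L M] [LieModule.IsNilpotent L M] {x : L} {m : M} {c : R} (hm : m ≠ 0)
    (h : ⁅x, m⁆ = c • m) : c = 0 := by
  have hc : (LieModule.toEnd R L M x).HasEigenvalue c :=
    Module.End.hasEigenvalue_of_hasEigenvector ⟨Module.End.mem_eigenspace_iff.2 h, hm⟩
  exact (hc.isNilpotent_of_isNilpotent (LieModule.isNilpotent_toEnd_of_isNilpotent R L M x)).eq_zero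

theorem LinearIndependent.eq_or_eq_of_add_eq_add {ι R M : Type*} [Semiring R] [Nontrivial R]
    [AddCommMonoid M] [Module R M] {v : ι → M} (hv : LinearIndependent R v) {a b c d : ι}
    (hab : a ≠ b) (h : v a + v b = v c + v d) : a = c ∨ a = d := by
  have hsingle : Finsupp.single a (1 : R) + Finsupp.single b 1 =
      Finsupp.single c 1 + Finsupp.single d 1 :=
    hv (by simpa using h)
  rcases (Finsupp.single_add_single_eq_single_add_single one_ne_zero one_ne_zero).1 hsingle with
    ⟨hac, -⟩ | ⟨-, had, -⟩ | ⟨-, hab', -⟩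
  · exact .inl hac
  · exact .inr had
  · exact absurd hab' hab

theorem eq_or_eq_of_min_eq_of_max_eq {α : Type*} [LinearOrder α] {a b c d : α}
    (hmin : min a b = min c d) (hmax : max a b = max c d) : a = c ∨ a = d := by
  have ha : a = min a b ∨ a = max a b :=
    (le_total a b).imp (fun h => (min_eq_left h).symm) (fun h => (max_eq_left h).symm)
  rw [hmin, hmax] at ha
  rcases ha with ha | ha
  · exact (min_choice c d).imp (ha.trans ·) (ha.trans ·)
  · exact (max_choice c d).imp (ha.trans ·) (ha.trans ·)

def rootVector {ι : Type*} [DecidableEq ι] (x y z : ι) : ι → ℝ :=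
  Pi.single z 1 - Pi.single x 1 - Pi.single y 1

theorem rootVector_comm {ι : Type*} [DecidableEq ι] (x y z : ι) :
    rootVector y x z = rootVector x y z :=
  sub_right_comm _ _ _

section StructConst

variable {g : Type*} [LieRing g] [LieAlgebra ℝ g] {n : ℕ} (b : Module.Basis (Fin n) ℝ g)

theorem ne_of_structConst_ne_zero {i j k : Fin n} (h : structConst b i j k ≠ 0) : i ≠ j := by
  rintro rfl
  exact h (structConst_self b i k)

theorem repr_lie_basis_apply (x : g) (j l : Fin n) :
    b.repr ⁅x, b j⁆ l = ∑ p, b.repr x p * structConst b p j l := by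
  conv_lhs => rw [← b.sum_repr x]
  simp only [sum_lie, smul_lie, map_sum, map_smul, Finsupp.coe_finsetSum, Finset.sum_apply,
    Finsupp.smul_apply, smul_eq_mul, structConst]

theorem repr_basis_lie_apply (x : g) (k l : Fin n) :
    b.repr ⁅b k, x⁆ l = ∑ p, b.repr x p * structConst b k p l := by
  conv_lhs => rw [← b.sum_repr x]
  simp only [lie_sum, lie_smul, map_sum, map_smul, Finsupp.coe_finsetSum, Finset.sum_apply,
    Finsupp.smul_apply, smul_eq_mul, structConst]

theorem repr_basis_lie_lie_apply (i j k l : Fin n) :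
    b.repr ⁅b k, ⁅b i, b j⁆⁆ l =
      ∑ p, structConst b k i p * structConst b p j l +
        ∑ p, structConst b k j p * structConst b i p l := by
  rw [leibniz_lie, map_add, Finsupp.add_apply, repr_lie_basis_apply, repr_basis_lie_apply]
  rfl

theorem IsNiceBasis.structConst_diag_eq_zero [LieRing.IsNilpotent g]
    {b : Module.Basis (Fin n) ℝ g} (hb : IsNiceBasis b) (k m : Fin n) :
    structConst b k m m = 0 := by
  obtain ⟨l, d, hl⟩ := hb.1 k m
  rcases eq_or_ne l m with rfl | hlm
  · simp [structConst, hl, LieModule.eq_zero_of_lie_eq_smul (b.ne_zero l) hl]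
  · simp [structConst, hl, Finsupp.single_eq_of_ne hlm.symm]

def RootIndex : Type :=
  {p : Fin n × Fin n × Fin n // p.1 < p.2.1 ∧ structConst b p.1 p.2.1 p.2.2 ≠ 0}

def RootIndex.ofStructConst {x y z : Fin n} (h : structConst b x y z ≠ 0) : RootIndex b :=
  ⟨(min x y, max x y, z), min_lt_max.2 (ne_of_structConst_ne_zero b h), by
    rcases le_total x y with hxy | hxy
    · simpa [min_eq_left hxy, max_eq_right hxy] using h
    · simpa [min_eq_right hxy, max_eq_left hxy, structConst_swap b x y z] using h⟩

def rootFamily (p : RootIndex b) : Fin n → ℝ :=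
  rootVector p.1.1 p.1.2.1 p.1.2.2

theorem rootFamily_ofStructConst {x y z : Fin n} (h : structConst b x y z ≠ 0) :
    rootFamily b (RootIndex.ofStructConst b h) = rootVector x y z := by
  rcases le_total x y with hxy | hxy
  · simp [rootFamily, RootIndex.ofStructConst, min_eq_left hxy, max_eq_right hxy]
  · simp [rootFamily, RootIndex.ofStructConst, min_eq_right hxy, max_eq_left hxy, rootVector_comm]

theorem not_linearIndependent_rootFamily {i j k l m p : Fin n} (hkj : k ≠ j) (hml : m ≠ l)
    (h₁ : structConst b i j m ≠ 0) (h₂ : structConst b k m l ≠ 0)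
    (h₃ : structConst b k i p ≠ 0) (h₄ : structConst b p j l ≠ 0) :
    ¬ LinearIndependent ℝ (rootFamily b) := by
  intro hindep
  have hrel : rootFamily b (.ofStructConst b h₁) + rootFamily b (.ofStructConst b h₂) =
      rootFamily b (.ofStructConst b h₃) + rootFamily b (.ofStructConst b h₄) := by
    simp only [rootFamily_ofStructConst, rootVector]
    abel
  rcases hindep.eq_or_eq_of_add_eq_add (fun h => hml (congrArg (·.1.2.2) h)) hrel with h | h
  · rcases eq_or_eq_of_min_eq_of_max_eq (congrArg (·.1.1) h).symm (congrArg (·.1.2.1) h).symm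
      with hki | hkj'
    · exact ne_of_structConst_ne_zero b h₃ hki
    · exact hkj hkj'
  · exact hml (congrArg (·.1.2.2) h)

end StructConst

theorem no_double_arrows_of_surjective_root_matrix_general
    (g : Type*) [LieRing g] [LieAlgebra ℝ g]
    [LieRing.IsNilpotent g]
    {n : ℕ} (b : Module.Basis (Fin n) ℝ g) (hb : IsNiceBasis b)
    (hindep : LinearIndependent ℝ
      (fun p : {p : Fin n × Fin n × Fin n //
          p.1 < p.2.1 ∧ structConst b p.1 p.2.1 p.2.2 ≠ 0} =>
        (Pi.single p.1.2.2 1 - Pi.single p.1.1 1 - Pi.single p.1.2.1 1 : Fin n → ℝ))) :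
    ∀ i j k : Fin n, k ≠ i → k ≠ j → ⁅b k, ⁅b i, b j⁆⁆ = 0 := by
  intro i j k hki hkj
  by_contra hne
  obtain ⟨l, hl⟩ : ∃ l, b.repr ⁅b k, ⁅b i, b j⁆⁆ l ≠ 0 :=
    Finsupp.ne_iff.1 (b.repr.map_ne_zero_iff.2 hne)
  obtain ⟨m, -, hm⟩ : ∃ m ∈ Finset.univ, structConst b i j m * structConst b k m l ≠ 0 :=
    Finset.exists_ne_zero_of_sum_ne_zero (by rwa [repr_basis_lie_apply] at hl)
  obtain ⟨him, hkml⟩ := mul_ne_zero_iff.1 hm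
  have hml : m ≠ l := by
    rintro rfl
    exact hkml (hb.structConst_diag_eq_zero k m)
  rw [repr_basis_lie_lie_apply] at hl
  obtain hA | hB : (∑ p, structConst b k i p * structConst b p j l) ≠ 0 ∨
      (∑ p, structConst b k j p * structConst b i p l) ≠ 0 := by
    by_contra! h
    simp [h.1, h.2] at hl
  · obtain ⟨p, -, hp⟩ := Finset.exists_ne_zero_of_sum_ne_zero hA
    obtain ⟨hkip, hpjl⟩ := mul_ne_zero_iff.1 hp
    exact not_linearIndependent_rootFamily b hkj hml him hkml hkip hpjl hindep
  · obtain ⟨q, -, hq⟩ := Finset.exists_ne_zero_of_sum_ne_zero hB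
    obtain ⟨hkjq, hiql⟩ := mul_ne_zero_iff.1 hq
    rw [← neg_ne_zero, ← structConst_swap] at him hiql
    exact not_linearIndependent_rootFamily b hki hml him hkml hkjq hiql hindep

/-- If the root vectors `ε_k − ε_i − ε_j` (one for each triple `(i,j,k)` with `i < j` and
`c_{ijk} ≠ 0`) of a nice basis of a nilpotent Lie algebra are linearly independent over
`ℝ`, then the nice diagram has no double arrows: `⁅e_k, ⁅e_i, e_j⁆⁆ = 0` whenever
`k ≠ i` and `k ≠ j`. -/
theorem no_double_arrows_of_surjective_root_matrix
    (g : Type*) [LieRing g] [LieAlgebra ℝ g] [FiniteDimensional ℝ g]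
    [LieRing.IsNilpotent g]
    {n : ℕ} (b : Module.Basis (Fin n) ℝ g) (hb : IsNiceBasis b)
    (hindep : LinearIndependent ℝ
      (fun p : {p : Fin n × Fin n × Fin n //
          p.1 < p.2.1 ∧ structConst b p.1 p.2.1 p.2.2 ≠ 0} =>
        (Pi.single p.1.2.2 1 - Pi.single p.1.1 1 - Pi.single p.1.2.1 1 : Fin n → ℝ))) :
    ∀ i j k : Fin n, k ≠ i → k ≠ j → ⁅b k, ⁅b i, b j⁆⁆ = 0 :=
  no_double_arrows_of_surjective_root_matrix_general g b hb hindep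
end

section
/- For every λ ∈ ℝ, the alternating bilinear bracket on ℝ⁷ defined on the standard basis e_1, …, e_7 by ⁅e_1,e_2⁆ = (1−λ)e_3, ⁅e_1,e_3⁆ = e_4, ⁅e_1,e_4⁆ = λe_5, ⁅e_2,e_3⁆ = e_5, ⁅e_2,e_4⁆ = e_6, ⁅e_1,e_5⁆ = e_6, ⁅e_3,e_4⁆ = e_7, ⁅e_2,e_5⁆ = e_7, ⁅e_1,e_6⁆ = e_7, with all other brackets of basis vectors zero up to antisymmetry, satisfies the Jacobi identity; the resulting Lie algebra is nilpotent and the standard basis is a nice basis. (This is the one-parameter family 754321:9 of 7-dimensional nice nilpotent Lie algebras.) -/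
/-- The one-parameter family `754321:9` of brackets on `ℝ⁷`:
`(0, 0, (1−λ)e¹², e¹³, λe¹⁴ + e²³, e²⁴ + e¹⁵, e³⁴ + e²⁵ + e¹⁶)`. -/
noncomputable def br (lam : ℝ) (x y : Fin 7 → ℝ) : Fin 7 → ℝ :=
  ![0, 0,
    (1 - lam) * (x 0 * y 1 - x 1 * y 0),
    x 0 * y 2 - x 2 * y 0,
    lam * (x 0 * y 3 - x 3 * y 0) + (x 1 * y 2 - x 2 * y 1),
    (x 1 * y 3 - x 3 * y 1) + (x 0 * y 4 - x 4 * y 0),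
    (x 2 * y 3 - x 3 * y 2) + (x 1 * y 4 - x 4 * y 1) + (x 0 * y 5 - x 5 * y 0)]

lemma br0 (lam : ℝ) (x y : Fin 7 → ℝ) : br lam x y 0 = 0 := rfl
lemma br1 (lam : ℝ) (x y : Fin 7 → ℝ) : br lam x y 1 = 0 := rfl
lemma br2 (lam : ℝ) (x y : Fin 7 → ℝ) :
    br lam x y 2 = (1 - lam) * (x 0 * y 1 - x 1 * y 0) := rfl
lemma br3 (lam : ℝ) (x y : Fin 7 → ℝ) : br lam x y 3 = x 0 * y 2 - x 2 * y 0 := rfl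
lemma br4 (lam : ℝ) (x y : Fin 7 → ℝ) :
    br lam x y 4 = lam * (x 0 * y 3 - x 3 * y 0) + (x 1 * y 2 - x 2 * y 1) := rfl
lemma br5 (lam : ℝ) (x y : Fin 7 → ℝ) :
    br lam x y 5 = (x 1 * y 3 - x 3 * y 1) + (x 0 * y 4 - x 4 * y 0) := rfl
lemma br6 (lam : ℝ) (x y : Fin 7 → ℝ) :
    br lam x y 6 = (x 2 * y 3 - x 3 * y 2) + (x 1 * y 4 - x 4 * y 1) + (x 0 * y 5 - x 5 * y 0) := rfl

lemma funext7 {f g : Fin 7 → ℝ} (h0 : f 0 = g 0) (h1 : f 1 = g 1) (h2 : f 2 = g 2)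
    (h3 : f 3 = g 3) (h4 : f 4 = g 4) (h5 : f 5 = g 5) (h6 : f 6 = g 6) : f = g := by
  funext t; fin_cases t <;> assumption

set_option maxHeartbeats 4000000 in
/-- For every `λ ∈ ℝ`, the bracket `br λ` is antisymmetric, satisfies the Jacobi
identity, the resulting Lie algebra is nilpotent (all 7-fold nested brackets vanish), and
the standard basis of `ℝ⁷` is a nice basis. -/
theorem family_754321_9_is_nice_nilpotent (lam : ℝ) :
    (∀ x y : Fin 7 → ℝ, br lam x y = - br lam y x) ∧
    (∀ x y z : Fin 7 → ℝ,
      br lam (br lam x y) z + br lam (br lam y z) x + br lam (br lam z x) y = 0) ∧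
    (∀ v : Fin 7 → (Fin 7 → ℝ),
      br lam (v 0) (br lam (v 1) (br lam (v 2)
        (br lam (v 3) (br lam (v 4) (br lam (v 5) (v 6)))))) = 0) ∧
    (∀ i j : Fin 7, ∃ (k : Fin 7) (c : ℝ),
      br lam (Pi.single i 1) (Pi.single j 1) = c • (Pi.single k 1 : Fin 7 → ℝ)) ∧
    (∀ i k j j' : Fin 7, br lam (Pi.single i 1) (Pi.single j 1) k ≠ 0 →
      br lam (Pi.single i 1) (Pi.single j' 1) k ≠ 0 → j = j') := by
  refine ⟨?_, ?_, ?_, ?_, ?_⟩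
  · intro x y
    apply funext7 <;>
      simp only [br0, br1, br2, br3, br4, br5, br6, Pi.neg_apply] <;> ring
  · intro x y z
    apply funext7 <;>
      simp only [br0, br1, br2, br3, br4, br5, br6, Pi.add_apply, Pi.zero_apply] <;> ring
  · intro v
    set a := br lam (v 5) (v 6) with ha
    set b := br lam (v 4) a with hb
    set c := br lam (v 3) b with hc
    set d := br lam (v 2) c with hd
    set e := br lam (v 1) d with he
    have a0 : a 0 = 0 := br0 _ _ _
    have a1 : a 1 = 0 := br1 _ _ _
    have b0 : b 0 = 0 := br0 _ _ _
    have b1 : b 1 = 0 := br1 _ _ _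
    have b2 : b 2 = 0 := by rw [hb, br2, a0, a1]; ring
    have c0 : c 0 = 0 := br0 _ _ _
    have c1 : c 1 = 0 := br1 _ _ _
    have c2 : c 2 = 0 := by rw [hc, br2, b0, b1]; ring
    have c3 : c 3 = 0 := by rw [hc, br3, b0, b2]; ring
    have d0 : d 0 = 0 := br0 _ _ _
    have d1 : d 1 = 0 := br1 _ _ _
    have d2 : d 2 = 0 := by rw [hd, br2, c0, c1]; ring
    have d3 : d 3 = 0 := by rw [hd, br3, c0, c2]; ring
    have d4 : d 4 = 0 := by rw [hd, br4, c0, c1, c2, c3]; ring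
    have e0 : e 0 = 0 := br0 _ _ _
    have e1 : e 1 = 0 := br1 _ _ _
    have e2 : e 2 = 0 := by rw [he, br2, d0, d1]; ring
    have e3 : e 3 = 0 := by rw [he, br3, d0, d2]; ring
    have e4 : e 4 = 0 := by rw [he, br4, d0, d1, d2, d3]; ring
    have e5 : e 5 = 0 := by rw [he, br5, d0, d1, d3, d4]; ring
    apply funext7 <;>
      simp only [br0, br1, br2, br3, br4, br5, br6, Pi.zero_apply,
        e0, e1, e2, e3, e4, e5] <;> ring
  · intro i j
    fin_cases i <;> fin_cases j <;>
    first
    | (refine ⟨0, 0, ?_⟩; (apply funext7 <;> simp [br0,br1,br2,br3,br4,br5,br6, Pi.single_apply]); done)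
    | (refine ⟨2, 1-lam, ?_⟩; (apply funext7 <;> simp [br0,br1,br2,br3,br4,br5,br6, Pi.single_apply]); done)
    | (refine ⟨2, -(1-lam), ?_⟩; (apply funext7 <;> simp [br0,br1,br2,br3,br4,br5,br6, Pi.single_apply]); done)
    | (refine ⟨3, 1, ?_⟩; (apply funext7 <;> simp [br0,br1,br2,br3,br4,br5,br6, Pi.single_apply]); done)
    | (refine ⟨3, -1, ?_⟩; (apply funext7 <;> simp [br0,br1,br2,br3,br4,br5,br6, Pi.single_apply]); done)
    | (refine ⟨4, lam, ?_⟩; (apply funext7 <;> simp [br0,br1,br2,br3,br4,br5,br6, Pi.single_apply]); done)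
    | (refine ⟨4, -lam, ?_⟩; (apply funext7 <;> simp [br0,br1,br2,br3,br4,br5,br6, Pi.single_apply]); done)
    | (refine ⟨4, 1, ?_⟩; (apply funext7 <;> simp [br0,br1,br2,br3,br4,br5,br6, Pi.single_apply]); done)
    | (refine ⟨4, -1, ?_⟩; (apply funext7 <;> simp [br0,br1,br2,br3,br4,br5,br6, Pi.single_apply]); done)
    | (refine ⟨5, 1, ?_⟩; (apply funext7 <;> simp [br0,br1,br2,br3,br4,br5,br6, Pi.single_apply]); done)
    | (refine ⟨5, -1, ?_⟩; (apply funext7 <;> simp [br0,br1,br2,br3,br4,br5,br6, Pi.single_apply]); done)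
    | (refine ⟨6, 1, ?_⟩; (apply funext7 <;> simp [br0,br1,br2,br3,br4,br5,br6, Pi.single_apply]); done)
    | (refine ⟨6, -1, ?_⟩; (apply funext7 <;> simp [br0,br1,br2,br3,br4,br5,br6, Pi.single_apply]); done)
  · intro i k j j'
    fin_cases j <;> fin_cases j' <;>
    first
    | (intro _ _; rfl)
    | (fin_cases i <;> fin_cases k <;> intro h1 h2 <;>
        simp [br0,br1,br2,br3,br4,br5,br6, Pi.single_apply] at h1 h2)
end
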